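/- arXiv:1303.0581 — 7 statements merged into one kernel-verified Lean document; each statement's English description precedes it below -/
import Mathlib

section
/- Let 0 ≤ i ≤ j ≤ L be integers with L ≥ 1, and let D, E ∈ {0,2}^L be (i,j,L)-admissible words that differ in at most one position. Then the concatenated word DE of length 2L is (i,j,L)-admissible. -/
/-!
Words over the alphabet {0,2} are modeled as `List Bool`, where `true` represents the
symbol `2` and `false` represents the symbol `0`.
-/

/-- The number of occurrences of the symbol `2` in the window of length `L`
starting at position `m` of the word `w`. -/
def winCount (w : List Bool) (m L : ℕ) : ℕ := ((w.drop m).take L).count true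

/-- A finite word `w` over `{0,2}` is `(i,j,L)`-admissible if every sub-word of `L`
consecutive letters contains at least `i` and at most `j` occurrences of the symbol `2`. -/
def Admissible (i j L : ℕ) (w : List Bool) : Prop :=
  ∀ m, m + L ≤ w.length → i ≤ winCount w m L ∧ winCount w m L ≤ j

/-!
A window of `D ++ E` of length `L` starts at some `m ≤ L` and reads `D.drop m ++ E.take m`.
As `D` and `E` differ in at most one position, either `E.take m = D.take m` or
`E.drop m = D.drop m`, so the window is a rotation of `D` or of `E` and contains as many
letters `2` as one of these admissible words of length `L`.
-/

namespace List

variable {α : Type*}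

theorem take_eq_or_drop_eq_of_subsingleton_ne {l₁ l₂ : List α}
    (h : {p : ℕ | l₁[p]? ≠ l₂[p]?}.Subsingleton) (m : ℕ) :
    l₁.take m = l₂.take m ∨ l₁.drop m = l₂.drop m := by
  by_contra! ⟨htake, hdrop⟩
  obtain ⟨p, hp⟩ : ∃ p, (l₁.take m)[p]? ≠ (l₂.take m)[p]? := by
    by_contra! hall
    exact htake (ext_getElem? hall)
  obtain ⟨q, hq⟩ : ∃ q, (l₁.drop m)[q]? ≠ (l₂.drop m)[q]? := by
    by_contra! hall
    exact hdrop (ext_getElem? hall)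
  have hpm : p < m := by
    by_contra hpm
    simp [hpm] at hp
  simp only [getElem?_take_of_lt hpm] at hp
  simp only [getElem?_drop] at hq
  have := h hp hq
  omega

theorem subsingleton_getElem?_ne_of_card_filter_getD_ne_le_one [DecidableEq α]
    {l₁ l₂ : List α} (hlen : l₁.length = l₂.length) (d : α)
    (h : ((Finset.range l₁.length).filter fun p => l₁.getD p d ≠ l₂.getD p d).card ≤ 1) :
    {p : ℕ | l₁[p]? ≠ l₂[p]?}.Subsingleton := by
  have hmem : ∀ p, l₁[p]? ≠ l₂[p]? →
      p ∈ (Finset.range l₁.length).filter fun p => l₁.getD p d ≠ l₂.getD p d := by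
    intro p hp
    have hp_lt : p < l₁.length := by
      by_contra hge
      simp_all
    simp_all [getD_eq_getElem?_getD]
  exact fun p hp q hq => Finset.card_le_one.mp h p (hmem p hp) q (hmem q hq)

theorem take_length_drop_append {l₁ l₂ : List α} {m : ℕ} (hm : m ≤ l₁.length) :
    ((l₁ ++ l₂).drop m).take l₁.length = l₁.drop m ++ l₂.take m := by
  rw [drop_append_of_le_length hm, take_append, take_of_length_le (by simp),
    length_drop, Nat.sub_sub_self hm]

end List

theorem winCount_append_length {D E : List Bool} {m : ℕ} (hm : m ≤ D.length) :
    winCount (D ++ E) m D.length = (D.drop m).count true + (E.take m).count true := by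
  rw [winCount, List.take_length_drop_append hm, List.count_append]

theorem Admissible.count_true_bounds {i j : ℕ} {w : List Bool} (h : Admissible i j w.length w) :
    i ≤ w.count true ∧ w.count true ≤ j := by
  simpa [winCount] using h 0 (by simp)

theorem concat_admissible_of_differ_at_most_one_general
    (i j L : ℕ)
    (D E : List Bool) (hD : D.length = L) (hE : E.length = L)
    (hDa : Admissible i j L D) (hEa : Admissible i j L E)
    (hdiff : ((Finset.range L).filter fun m => D.getD m false ≠ E.getD m false).card ≤ 1) :
    Admissible i j L (D ++ E) := by
  subst hD
  intro m hm
  have hmL : m ≤ D.length := by simp only [List.length_append, hE] at hm; omega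
  have hsub := List.subsingleton_getElem?_ne_of_card_filter_getD_ne_le_one hE.symm false hdiff
  rw [winCount_append_length hmL]
  rcases List.take_eq_or_drop_eq_of_subsingleton_ne hsub m with htake | hdrop
  · rw [← htake, add_comm, ← List.count_append, List.take_append_drop]
    exact hDa.count_true_bounds
  · rw [hdrop, add_comm, ← List.count_append, List.take_append_drop]
    exact (hE ▸ hEa).count_true_bounds

/-- if `D, E ∈ {0,2}^L` are `(i,j,L)`-admissible words differing in at most
one position, then the concatenation `DE` is `(i,j,L)`-admissible. -/
theorem concat_admissible_of_differ_at_most_one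
    (i j L : ℕ) (hL : 1 ≤ L) (hij : i ≤ j) (hjL : j ≤ L)
    (D E : List Bool) (hD : D.length = L) (hE : E.length = L)
    (hDa : Admissible i j L D) (hEa : Admissible i j L E)
    (hdiff : ((Finset.range L).filter fun m => D.getD m false ≠ E.getD m false).card ≤ 1) :
    Admissible i j L (D ++ E) :=
  concat_admissible_of_differ_at_most_one_general i j L D E hD hE hDa hEa hdiff
end

section
/- Let 0 ≤ i < j ≤ L be integers and let A, B ∈ {0,2}^L be (i,j,L)-admissible words. Then there exist an integer n with 0 ≤ n ≤ 2·min(j, L−i) and (i,j,L)-admissible words D₀ = A, D₁, …, D_n = B in {0,2}^L such that for each 0 ≤ m < n the words D_m and D_{m+1} differ in at most one position. -/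
/-- Two words (of length `L`) differ in at most one of the positions `0, …, L-1`. -/
def DifferAtMostOne (L : ℕ) (u v : List Bool) : Prop :=
  ((Finset.range L).filter fun m => u.getD m false ≠ v.getD m false).card ≤ 1

/-!
A word of length `L` is determined by the set `s ⊆ {0, …, L-1}` of positions carrying a `2`.
Its only window is the whole word, so admissibility says `i ≤ #s ≤ j`, and two words differ in
at most one position iff their sets have symmetric difference of size at most one.

To go from `s` to `t`, toggle one element of `s ∆ t` at a time: add an element of `t \ s` while
`#s < j`, otherwise remove one of `s \ t`. Because `#s + #(t \ s) = #t + #(s \ t)` and `i < j`,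
one of the two moves always stays within the bounds. This takes `#(s ∆ t) = #(s \ t) + #(t \ s)`
steps, and each summand is at most `j` and at most `L - i`.
-/

open Finset
open scoped symmDiff

theorem exists_chain_of_exists_step {α : Type*} (P : α → Prop) (R : α → α → Prop)
    (d : α → α → ℕ) (eq_of_d_eq_zero : ∀ a b, d a b = 0 → a = b)
    (step : ∀ a b, P a → P b → d a b ≠ 0 → ∃ c, P c ∧ R a c ∧ d c b + 1 = d a b)
    {a b : α} (ha : P a) (hb : P b) :
    ∃ D : ℕ → α, D 0 = a ∧ D (d a b) = b ∧
      (∀ m ≤ d a b, P (D m)) ∧ ∀ m < d a b, R (D m) (D (m + 1)) := by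
  induction hn : d a b generalizing a with
  | zero => exact ⟨fun _ => a, rfl, eq_of_d_eq_zero a b hn, fun _ _ => ha, by simp⟩
  | succ n ih =>
    obtain ⟨c, hc, hac, hcb⟩ := step a b ha hb (by omega)
    obtain ⟨D, hD0, hDn, hP, hR⟩ := ih hc (by omega)
    refine ⟨fun | 0 => a | m + 1 => D m, rfl, hDn, ?_, ?_⟩
    · rintro (_ | m) hm
      exacts [ha, hP m (by omega)]
    · rintro (_ | m) hm
      · simpa [hD0] using hac
      · exact hR m (by omega)

namespace Finset

variable {α : Type*} [DecidableEq α]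

theorem card_symmDiff (s t : Finset α) : #(s ∆ t) = #(s \ t) + #(t \ s) :=
  card_union_of_disjoint disjoint_sdiff_sdiff

theorem symmDiff_singleton_of_mem {s : Finset α} {x : α} (hx : x ∈ s) :
    s ∆ {x} = s.erase x := by
  ext y
  by_cases hy : y = x <;> simp [mem_symmDiff, hy, hx]

theorem symmDiff_singleton_of_notMem {s : Finset α} {x : α} (hx : x ∉ s) :
    s ∆ {x} = insert x s := by
  ext y
  by_cases hy : y = x <;> simp [mem_symmDiff, hy, hx]

theorem card_symmDiff_le_two_mul_min {s t u : Finset α} {i j : ℕ} (hs : s ⊆ u) (ht : t ⊆ u)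
    (hs_card : i ≤ #s ∧ #s ≤ j) (ht_card : i ≤ #t ∧ #t ≤ j) :
    #(s ∆ t) ≤ 2 * min j (#u - i) := by
  have hst : #(s \ t) ≤ #(u \ t) := card_le_card (sdiff_subset_sdiff hs le_rfl)
  have hts : #(t \ s) ≤ #(u \ s) := card_le_card (sdiff_subset_sdiff ht le_rfl)
  rw [card_sdiff_of_subset ht] at hst
  rw [card_sdiff_of_subset hs] at hts
  have hst' : #(s \ t) ≤ #s := card_le_card sdiff_subset
  have hts' : #(t \ s) ≤ #t := card_le_card sdiff_subset
  rw [card_symmDiff]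
  omega

theorem exists_mem_symmDiff_bounded_flip {s t : Finset α} {i j : ℕ} (hij : i < j)
    (hs : i ≤ #s ∧ #s ≤ j) (ht : i ≤ #t ∧ #t ≤ j) (hst : s ≠ t) :
    ∃ x ∈ s ∆ t, i ≤ #(s ∆ {x}) ∧ #(s ∆ {x}) ≤ j := by
  have hunion : #s + #(t \ s) = #t + #(s \ t) := by
    rw [add_comm, card_sdiff_add_card, add_comm, card_sdiff_add_card, union_comm]
  have hpos : 0 < #(s ∆ t) := card_pos.2 (symmDiff_nonempty.2 hst)
  rw [card_symmDiff] at hpos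
  by_cases hup : 0 < #(t \ s) ∧ #s < j
  · obtain ⟨x, hx⟩ := card_pos.1 hup.1
    have hxs : x ∉ s := (mem_sdiff.1 hx).2
    refine ⟨x, symmDiff_subset_sdiff' hx, ?_⟩
    rw [symmDiff_singleton_of_notMem hxs, card_insert_of_notMem hxs]
    omega
  · obtain ⟨x, hx⟩ := card_pos.1 (show 0 < #(s \ t) by omega)
    have hxs : x ∈ s := (mem_sdiff.1 hx).1
    refine ⟨x, symmDiff_subset_sdiff hx, ?_⟩
    rw [symmDiff_singleton_of_mem hxs, card_erase_of_mem hxs]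
    omega

theorem exists_chain_of_card_bounds {s t u : Finset α} {i j : ℕ} (hij : i < j)
    (hs : s ⊆ u ∧ i ≤ #s ∧ #s ≤ j) (ht : t ⊆ u ∧ i ≤ #t ∧ #t ≤ j) :
    ∃ D : ℕ → Finset α, D 0 = s ∧ D #(s ∆ t) = t ∧
      (∀ m ≤ #(s ∆ t), D m ⊆ u ∧ i ≤ #(D m) ∧ #(D m) ≤ j) ∧
      ∀ m < #(s ∆ t), #(D m ∆ D (m + 1)) ≤ 1 := by
  refine exists_chain_of_exists_step (fun s => s ⊆ u ∧ i ≤ #s ∧ #s ≤ j) (fun s s' => #(s ∆ s') ≤ 1)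
    (fun s t => #(s ∆ t)) (fun s t h => symmDiff_eq_empty.1 (card_eq_zero.1 h)) ?_ hs ht
  rintro s t ⟨hsu, hs⟩ ⟨htu, ht⟩ hst
  obtain ⟨x, hx, hflip⟩ :=
    exists_mem_symmDiff_bounded_flip hij hs ht (fun h => hst (by simp [h]))
  refine ⟨s ∆ {x}, ⟨?_, hflip⟩, by simp [symmDiff_symmDiff_cancel_left], ?_⟩
  · exact symmDiff_subset_union.trans <| union_subset hsu <| singleton_subset_iff.2 <|
      union_subset hsu htu (symmDiff_subset_union hx)
  · rw [symmDiff_right_comm, symmDiff_singleton_of_mem hx, card_erase_add_one hx]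

end Finset

def truePositions (L : ℕ) (w : List Bool) : Finset ℕ := (range L).filter fun m => w.getD m false

def ofPositions (L : ℕ) (s : Finset ℕ) : List Bool := (List.range L).map (· ∈ s)

theorem length_ofPositions (L : ℕ) (s : Finset ℕ) : (ofPositions L s).length = L := by
  simp [ofPositions]

theorem getD_ofPositions {L m : ℕ} (s : Finset ℕ) (hm : m < L) :
    (ofPositions L s).getD m false = decide (m ∈ s) := by
  simp [ofPositions, hm]

theorem ofPositions_truePositions {L : ℕ} {w : List Bool} (hw : w.length = L) :
    ofPositions L (truePositions L w) = w := by
  refine List.ext_getElem (by simp [length_ofPositions, hw]) fun m hm hm' => ?_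
  simp [ofPositions, truePositions, hw ▸ hm', hm']

theorem count_true_ofPositions {L : ℕ} {s : Finset ℕ} (hs : s ⊆ range L) :
    (ofPositions L s).count true = #s := by
  have hfilter : (range L).filter (· ∈ s) = s := filter_mem_eq_inter.trans (inter_eq_right.2 hs)
  rw [ofPositions, List.count_eq_countP, List.countP_map]
  conv_rhs => rw [← hfilter]
  simp [card_def, filter_val, range_val, Multiset.range, List.countP_eq_length_filter,
    Function.comp_def]

theorem admissible_ofPositions_iff {i j L : ℕ} {s : Finset ℕ} (hs : s ⊆ range L) :
    Admissible i j L (ofPositions L s) ↔ i ≤ #s ∧ #s ≤ j := by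
  have hwin : winCount (ofPositions L s) 0 L = #s := by
    rw [winCount, List.drop_zero, List.take_of_length_le (length_ofPositions L s).le,
      count_true_ofPositions hs]
  refine ⟨fun h => hwin ▸ h 0 (by simp [length_ofPositions]), fun h m hm => ?_⟩
  obtain rfl : m = 0 := by simpa [length_ofPositions] using hm
  exact hwin ▸ h

theorem differAtMostOne_ofPositions_iff {L : ℕ} {s t : Finset ℕ} (hs : s ⊆ range L)
    (ht : t ⊆ range L) :
    DifferAtMostOne L (ofPositions L s) (ofPositions L t) ↔ #(s ∆ t) ≤ 1 := by
  have hdiff : (range L).filter (fun m => (ofPositions L s).getD m false ≠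
      (ofPositions L t).getD m false) = s ∆ t := by
    ext m
    by_cases hm : m < L
    · rw [mem_filter, getD_ofPositions _ hm, getD_ofPositions _ hm, mem_symmDiff]
      simp only [mem_range, hm, true_and, ne_eq, decide_eq_decide]
      tauto
    · have hms : m ∉ s := fun h => hm (mem_range.1 (hs h))
      have hmt : m ∉ t := fun h => hm (mem_range.1 (ht h))
      simp [mem_symmDiff, hm, hms, hmt]
  rw [DifferAtMostOne, hdiff]

theorem chain_between_admissible_words_general
    (i j L : ℕ) (hij : i < j)
    (A B : List Bool) (hA : A.length = L) (hB : B.length = L)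
    (hAa : Admissible i j L A) (hBa : Admissible i j L B) :
    ∃ n ≤ 2 * min j (L - i), ∃ D : ℕ → List Bool,
      D 0 = A ∧ D n = B ∧
      (∀ m ≤ n, (D m).length = L ∧ Admissible i j L (D m)) ∧
      ∀ m < n, DifferAtMostOne L (D m) (D (m + 1)) := by
  obtain ⟨s, hs, rfl⟩ : ∃ s ⊆ range L, ofPositions L s = A :=
    ⟨_, filter_subset _ _, ofPositions_truePositions hA⟩
  obtain ⟨t, ht, rfl⟩ : ∃ t ⊆ range L, ofPositions L t = B :=
    ⟨_, filter_subset _ _, ofPositions_truePositions hB⟩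
  rw [admissible_ofPositions_iff hs] at hAa
  rw [admissible_ofPositions_iff ht] at hBa
  obtain ⟨D, hD0, hDn, hD, hstep⟩ := exists_chain_of_card_bounds hij ⟨hs, hAa⟩ ⟨ht, hBa⟩
  refine ⟨#(s ∆ t), card_range L ▸ card_symmDiff_le_two_mul_min hs ht hAa hBa,
    fun m => ofPositions L (D m), congrArg _ hD0, congrArg _ hDn, fun m hm => ?_, fun m hm => ?_⟩
  · exact ⟨length_ofPositions L _, (admissible_ofPositions_iff (hD m hm).1).2 (hD m hm).2⟩
  · exact (differAtMostOne_ofPositions_iff (hD m hm.le).1 (hD (m + 1) hm).1).2 (hstep m hm)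

/-- any two `(i,j,L)`-admissible words `A, B ∈ {0,2}^L` can be joined by a
chain `D₀ = A, D₁, …, D_n = B` of at most `2·min(j, L−i)` steps of `(i,j,L)`-admissible
words of length `L`, consecutive ones differing in at most one position. -/
theorem chain_between_admissible_words
    (i j L : ℕ) (hij : i < j) (hjL : j ≤ L)
    (A B : List Bool) (hA : A.length = L) (hB : B.length = L)
    (hAa : Admissible i j L A) (hBa : Admissible i j L B) :
    ∃ n ≤ 2 * min j (L - i), ∃ D : ℕ → List Bool,
      D 0 = A ∧ D n = B ∧
      (∀ m ≤ n, (D m).length = L ∧ Admissible i j L (D m)) ∧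
      ∀ m < n, DifferAtMostOne L (D m) (D (m + 1)) :=
  chain_between_admissible_words_general i j L hij A B hA hB hAa hBa
end

section
/- Let 0 ≤ i < j ≤ L be integers with L ≥ 1. Then H(i,j,L) is nonempty and the left shift σ restricted to H(i,j,L) is topologically mixing: for every pair of nonempty relatively open subsets U, V of H(i,j,L) there exists N ∈ ℕ such that σ^{−n}(U) ∩ V ≠ ∅ for all n ≥ N. -/
/-!
Bi-infinite sequences over the alphabet {0,2} are modeled as `ξ : ℤ → Bool`, where
`true` represents the symbol `2` and `false` represents the symbol `0`.  The space
`ℤ → Bool` carries the product topology (with `Bool` discrete).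
-/

/-- Number of occurrences of the symbol `2` in the window `ξ_m ξ_{m+1} ⋯ ξ_{m+L-1}`. -/
def zwinCount (ξ : ℤ → Bool) (m : ℤ) (L : ℕ) : ℕ :=
  ((Finset.range L).filter fun r : ℕ => ξ (m + (r : ℤ)) = true).card

/-- The subshift `H(i,j,L)`: sequences all of whose windows of length `L` contain at
least `i` and at most `j` occurrences of the symbol `2`. -/
def Hset (i j L : ℕ) : Set (ℤ → Bool) :=
  {ξ | ∀ m : ℤ, i ≤ zwinCount ξ m L ∧ zwinCount ξ m L ≤ j}

/-- The left shift on `{0,2}^ℤ`. -/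
def shift (ξ : ℤ → Bool) : ℤ → Bool := fun n => ξ (n + 1)

/-!
Encode `ξ` by its cumulative count `S : ℤ → ℤ`, so that `ξ t = 2` iff `S (t + 1) = S t + 1`.
Then `H(i,j,L)` becomes the set of unit-step functions whose increments over every window of
length `L` lie in `[i, j]`: a class closed under `max`, `min` and adding constants, which contains
the ramps `Pₖ t = ⌈k t / L⌉` for `i ≤ k ≤ j`.

If the windows of `F` are at least `k`, then `F - Pₖ` is nondecreasing up to an error `L`; if they
are at most `k`, so is `Pₖ - F`. Hence, for suitable constants, the count `A` of `η` satisfies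
`Pⱼ + C₂ ≤ A ≤ Pᵢ + C₁` before time `a`, and the count `B` of `ξ` satisfies
`Pᵢ + C₁ ≤ B + C₃ ≤ Pⱼ + C₂` after time `b`; the latter is possible once `b - a` is of order `L²`,
because `Pⱼ - Pᵢ` grows at rate `(j - i) / L ≥ 1 / L`. The counting function
`max (min A (Pᵢ + C₁)) (min (B + C₃) (Pⱼ + C₂))` then agrees with `A` before `a` and with `B + C₃`
after `b`, so its increments form a point of `H(i,j,L)` that follows `η` in the past and `ξ` in
the future.
-/

lemma zwinCount_add (ξ : ℤ → Bool) (m : ℤ) (k l : ℕ) :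
    zwinCount ξ m (k + l) = zwinCount ξ m k + zwinCount ξ (m + k) l := by
  simp only [zwinCount, Finset.card_filter, Finset.sum_range_add, Nat.cast_add, add_assoc]

lemma zwinCount_zero (ξ : ℤ → Bool) (m : ℤ) : zwinCount ξ m 0 = 0 := rfl

lemma zwinCount_one (ξ : ℤ → Bool) (m : ℤ) : zwinCount ξ m 1 = (ξ m).toNat := by
  cases h : ξ m <;> simp [zwinCount, Finset.filter_singleton, h]

lemma zwinCount_comp_add (ξ : ℤ → Bool) (c m : ℤ) (L : ℕ) :
    zwinCount (fun t => ξ (t + c)) m L = zwinCount ξ (m + c) L := by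
  simp only [zwinCount, add_right_comm]

lemma comp_add_mem_Hset {i j L : ℕ} {ξ : ℤ → Bool} (hξ : ξ ∈ Hset i j L) (c : ℤ) :
    (fun t => ξ (t + c)) ∈ Hset i j L := fun m => by
  simpa only [zwinCount_comp_add] using hξ (m + c)

lemma zwinCount_eq_sub {ξ : ℤ → Bool} {S : ℤ → ℤ} (hS : ∀ t, S (t + 1) = S t + (ξ t).toNat)
    (m : ℤ) (L : ℕ) : (zwinCount ξ m L : ℤ) = S (m + L) - S m := by
  induction L with
  | zero => simp [zwinCount]
  | succ L ih =>
    rw [zwinCount_add, zwinCount_one, Nat.cast_add, ih, Nat.cast_succ, ← add_assoc, hS]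
    ring

/-- The number of `2`s in `[0, t)`, counted negatively in `[t, 0)` when `t < 0`. -/
def cumCount (ξ : ℤ → Bool) (t : ℤ) : ℤ :=
  zwinCount ξ 0 t.toNat - zwinCount ξ t (-t).toNat

lemma cumCount_succ (ξ : ℤ → Bool) (t : ℤ) :
    cumCount ξ (t + 1) = cumCount ξ t + (ξ t).toNat := by
  rcases le_or_gt 0 t with ht | ht
  · have h₁ : (t + 1).toNat = t.toNat + 1 := by omega
    have h₂ : (-(t + 1)).toNat = 0 ∧ (-t).toNat = 0 := by omega
    simp only [cumCount, h₁, h₂, zwinCount_add, zwinCount_one, zwinCount_zero,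
      Int.toNat_of_nonneg ht, zero_add]
    push_cast
    ring
  · have h₁ : (t + 1).toNat = 0 ∧ t.toNat = 0 := by omega
    have h₂ : (-t).toNat = 1 + (-(t + 1)).toNat := by omega
    simp only [cumCount, h₁, h₂, zwinCount_add, zwinCount_one]
    push_cast
    ring

def IsUnitStep (S : ℤ → ℤ) : Prop :=
  ∀ t, S (t + 1) = S t ∨ S (t + 1) = S t + 1

namespace IsUnitStep

variable {S : ℤ → ℤ} (hS : IsUnitStep S)
include hS

lemma monotone : Monotone S :=
  monotone_int_of_le_succ fun t => by rcases hS t with h | h <;> omega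

lemma le_add_sub {t u : ℤ} (htu : t ≤ u) : S u ≤ S t + (u - t) := by
  induction u, htu using Int.leInduction with
  | base => simp
  | succ u _ ih => rcases hS u with h | h <;> omega

end IsUnitStep

def ofIncrements (S : ℤ → ℤ) : ℤ → Bool := fun t => decide (S (t + 1) = S t + 1)

lemma IsUnitStep.succ_eq {S : ℤ → ℤ} (hS : IsUnitStep S) (t : ℤ) :
    S (t + 1) = S t + (ofIncrements S t).toNat := by
  rcases hS t with h | h <;> simp [ofIncrements, h]

lemma ofIncrements_congr {S T : ℤ → ℤ} {t : ℤ} (h : S (t + 1) - S t = T (t + 1) - T t) :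
    ofIncrements S t = ofIncrements T t := by
  simp only [ofIncrements, decide_eq_decide]
  omega

lemma ofIncrements_cumCount (ξ : ℤ → Bool) : ofIncrements (cumCount ξ) = ξ := by
  ext t
  cases h : ξ t <;> simp [ofIncrements, cumCount_succ, h]

structure IsCountingFn (i j L : ℕ) (S : ℤ → ℤ) : Prop where
  unitStep : IsUnitStep S
  le_window : ∀ m, (i : ℤ) ≤ S (m + L) - S m
  window_le : ∀ m, S (m + L) - S m ≤ j

lemma isCountingFn_cumCount {i j L : ℕ} {ξ : ℤ → Bool} (hξ : ξ ∈ Hset i j L) :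
    IsCountingFn i j L (cumCount ξ) where
  unitStep t := by cases (ξ t) <;> simp [cumCount_succ]
  le_window m := by rw [← zwinCount_eq_sub (cumCount_succ ξ)]; exact_mod_cast (hξ m).1
  window_le m := by rw [← zwinCount_eq_sub (cumCount_succ ξ)]; exact_mod_cast (hξ m).2

namespace IsCountingFn

variable {i j L : ℕ} {F G : ℤ → ℤ}

lemma ofIncrements_mem_Hset (hF : IsCountingFn i j L F) : ofIncrements F ∈ Hset i j L :=
  fun m => by
    have hcount := zwinCount_eq_sub hF.unitStep.succ_eq m L
    have := hF.le_window m
    have := hF.window_le m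
    omega

lemma add_const (hF : IsCountingFn i j L F) (c : ℤ) : IsCountingFn i j L (fun t => F t + c) where
  unitStep t := by dsimp only; rcases hF.unitStep t with h | h <;> omega
  le_window m := by have := hF.le_window m; omega
  window_le m := by have := hF.window_le m; omega

lemma max (hF : IsCountingFn i j L F) (hG : IsCountingFn i j L G) :
    IsCountingFn i j L (fun t => max (F t) (G t)) where
  unitStep t := by
    dsimp only; rcases hF.unitStep t with h | h <;> rcases hG.unitStep t with h' | h' <;> omega
  le_window m := by have := hF.le_window m; have := hG.le_window m; omega
  window_le m := by have := hF.window_le m; have := hG.window_le m; omega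

lemma min (hF : IsCountingFn i j L F) (hG : IsCountingFn i j L G) :
    IsCountingFn i j L (fun t => min (F t) (G t)) where
  unitStep t := by
    dsimp only; rcases hF.unitStep t with h | h <;> rcases hG.unitStep t with h' | h' <;> omega
  le_window m := by have := hF.le_window m; have := hG.le_window m; omega
  window_le m := by have := hF.window_le m; have := hG.window_le m; omega

end IsCountingFn

def ramp (k L : ℕ) (t : ℤ) : ℤ := ⌈(k * t : ℚ) / L⌉

lemma ramp_add_length (k : ℕ) {L : ℕ} (hL : 0 < L) (t : ℤ) :
    ramp k L (t + L) = ramp k L t + k := by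
  rw [ramp, ramp, ← Int.ceil_add_natCast]
  congr 1
  field_simp
  push_cast
  ring

lemma isUnitStep_ramp {k L : ℕ} (hkL : k ≤ L) : IsUnitStep (ramp k L) := fun t => by
  have hslope : (k / L : ℚ) ≤ 1 := div_le_one_of_le₀ (by exact_mod_cast hkL) (by positivity)
  have hsucc : (k * (t + 1 : ℤ) : ℚ) / L = k * t / L + k / L := by push_cast; ring
  have h₁ : ramp k L t ≤ ramp k L (t + 1) := by
    rw [ramp, ramp, hsucc]; exact Int.ceil_le_ceil (by simp; positivity)
  have h₂ : ramp k L (t + 1) ≤ ramp k L t + 1 := by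
    rw [ramp, ramp, hsucc, ← Int.ceil_add_one]; exact Int.ceil_le_ceil (by linarith)
  omega

lemma isCountingFn_ramp {i j k L : ℕ} (hL : 0 < L) (hik : i ≤ k) (hkj : k ≤ j) (hjL : j ≤ L) :
    IsCountingFn i j L (ramp k L) where
  unitStep := isUnitStep_ramp (hkj.trans hjL)
  le_window m := by rw [ramp_add_length k hL]; omega
  window_le m := by rw [ramp_add_length k hL]; omega

lemma ramp_bounds (k : ℕ) {L : ℕ} (hL : 0 < L) (t : ℤ) :
    k * t ≤ L * ramp k L t ∧ L * ramp k L t < k * t + L := by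
  have hL' : (0 : ℚ) < L := by exact_mod_cast hL
  unfold ramp
  have h₁ := Int.le_ceil ((k * t : ℚ) / L)
  have h₂ := Int.ceil_lt_add_one ((k * t : ℚ) / L)
  rw [div_le_iff₀ hL'] at h₁
  rw [← sub_lt_iff_lt_add, lt_div_iff₀ hL'] at h₂
  constructor
  · exact_mod_cast (by linarith : (k * t : ℚ) ≤ L * ⌈(k * t : ℚ) / L⌉)
  · exact_mod_cast (by linarith : (L * ⌈(k * t : ℚ) / L⌉ : ℚ) < k * t + L)

lemma sub_le_sub_add_of_window_le {L : ℕ} {F G : ℤ → ℤ} (hL : 0 < L) (hF : IsUnitStep F)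
    (hG : IsUnitStep G) (hFG : ∀ m, F (m + L) - F m ≤ G (m + L) - G m) {t u : ℤ}
    (htu : t ≤ u) : G t - F t ≤ G u - F u + L := by
  obtain ⟨d, hd⟩ : ∃ d : ℕ, u - t = d := ⟨(u - t).toNat, by omega⟩
  induction d using Nat.strong_induction_on generalizing t with
  | _ d ih =>
    by_cases hshort : u - t < L
    · have := hG.monotone htu
      have := hF.le_add_sub htu
      omega
    · have := ih (d - L) (by omega) (t := t + L) (by omega) (by omega)
      have := hFG t
      omega

section RampComparison

variable {k L : ℕ} {F : ℤ → ℤ} (hL : 0 < L) (hkL : k ≤ L) (hF : IsUnitStep F)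
include hL hkL hF

lemma sub_ramp_le_add (hk : ∀ m, (k : ℤ) ≤ F (m + L) - F m) {t u : ℤ} (htu : t ≤ u) :
    F t - ramp k L t ≤ F u - ramp k L u + L :=
  sub_le_sub_add_of_window_le hL (isUnitStep_ramp hkL) hF
    (fun m => by rw [ramp_add_length k hL]; linarith [hk m]) htu

lemma ramp_sub_le_add (hk : ∀ m, F (m + L) - F m ≤ k) {t u : ℤ} (htu : t ≤ u) :
    ramp k L t - F t ≤ ramp k L u - F u + L :=
  sub_le_sub_add_of_window_le hL hF (isUnitStep_ramp hkL)
    (fun m => by rw [ramp_add_length k hL]; linarith [hk m]) htu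

end RampComparison

lemma ramp_sub_ramp_add_lt {i j L : ℕ} (hL : 0 < L) (hij : i < j) {a b : ℤ}
    (hab : a + L * (4 * L + 2) ≤ b) :
    ramp j L a - ramp i L a + 4 * L < ramp j L b - ramp i L b := by
  obtain ⟨-, hja⟩ := ramp_bounds j hL a
  obtain ⟨hia, -⟩ := ramp_bounds i hL a
  obtain ⟨hjb, -⟩ := ramp_bounds j hL b
  obtain ⟨-, hib⟩ := ramp_bounds i hL b
  have hba : 0 ≤ b - a := by nlinarith
  have hslope : b - a ≤ (j - i) * (b - a) := le_mul_of_one_le_left hba (by omega)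
  have hscaled : L * (ramp j L a - ramp i L a + 4 * L) < L * (ramp j L b - ramp i L b) := by
    linarith
  exact lt_of_mul_lt_mul_left hscaled (by positivity)

theorem exists_isCountingFn_glue {i j L : ℕ} {A B : ℤ → ℤ} (hij : i < j) (hjL : j ≤ L)
    (hA : IsCountingFn i j L A) (hB : IsCountingFn i j L B) {a b : ℤ}
    (hab : a + L * (4 * L + 2) ≤ b) :
    ∃ S : ℤ → ℤ, ∃ c : ℤ, IsCountingFn i j L S ∧ (∀ t ≤ a, S t = A t) ∧
      ∀ t ≥ b, S t = B t + c := by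
  have hL : 0 < L := by omega
  have hiL : i ≤ L := hij.le.trans hjL
  have hgap := ramp_sub_ramp_add_lt hL hij hab
  obtain ⟨C₁, hC₁⟩ : ∃ C, C = A a - ramp i L a + L := ⟨_, rfl⟩
  obtain ⟨C₂, hC₂⟩ : ∃ C, C = A a - ramp j L a - L := ⟨_, rfl⟩
  obtain ⟨C₃, hC₃⟩ : ∃ C, C = C₁ + ramp i L b + L - B b := ⟨_, rfl⟩
  have hS := ((hA.min ((isCountingFn_ramp hL le_rfl hij.le hjL).add_const C₁)).max
    ((hB.add_const C₃).min ((isCountingFn_ramp hL hij.le le_rfl hjL).add_const C₂)))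
  refine ⟨_, C₃, hS, fun t ht => ?_, fun t ht => ?_⟩
  · have := sub_ramp_le_add hL hiL hA.unitStep hA.le_window ht
    have := ramp_sub_le_add hL hjL hA.unitStep hA.window_le ht
    omega
  · have := sub_ramp_le_add hL hiL hB.unitStep hB.le_window ht
    have := ramp_sub_le_add hL hjL hB.unitStep hB.window_le ht
    omega

theorem exists_mem_Hset_glue {i j L : ℕ} (hij : i < j) (hjL : j ≤ L) {ξ η : ℤ → Bool}
    (hξ : ξ ∈ Hset i j L) (hη : η ∈ Hset i j L) {a b : ℤ} (hab : a + L * (4 * L + 2) ≤ b) :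
    ∃ ζ ∈ Hset i j L, (∀ t < a, ζ t = η t) ∧ ∀ t ≥ b, ζ t = ξ t := by
  obtain ⟨S, c, hS, hleft, hright⟩ := exists_isCountingFn_glue hij hjL
    (isCountingFn_cumCount hη) (isCountingFn_cumCount hξ) hab
  refine ⟨ofIncrements S, hS.ofIncrements_mem_Hset, fun t ht => ?_, fun t ht => ?_⟩
  · rw [← congrFun (ofIncrements_cumCount η) t]
    exact ofIncrements_congr (by rw [hleft t ht.le, hleft (t + 1) ht])
  · rw [← congrFun (ofIncrements_cumCount ξ) t]
    exact ofIncrements_congr (by rw [hright t ht, hright (t + 1) (by omega)]; ring)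

lemma shift_iterate_apply (ζ : ℤ → Bool) (n : ℕ) (t : ℤ) : shift^[n] ζ t = ζ (t + n) := by
  induction n generalizing ζ with
  | zero => simp
  | succ n ih =>
    rw [Function.iterate_succ_apply, ih, shift]
    push_cast
    ring_nf

lemma IsOpen.exists_forall_natAbs_le_eq_imp_mem {U : Set (ℤ → Bool)} (hU : IsOpen U) {ξ : ℤ → Bool}
    (hξ : ξ ∈ U) : ∃ K : ℕ, ∀ ζ : ℤ → Bool, (∀ t : ℤ, t.natAbs ≤ K → ζ t = ξ t) → ζ ∈ U := by
  obtain ⟨I, u, hu, hIu⟩ := isOpen_pi_iff.mp hU ξ hξ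
  refine ⟨I.sup Int.natAbs, fun ζ hζ => hIu fun t ht => ?_⟩
  rw [hζ t (Finset.le_sup ht)]
  exact (hu t ht).2

theorem Hset_nonempty_and_topologically_mixing_general
    (i j L : ℕ) (hij : i < j) (hjL : j ≤ L) :
    (Hset i j L).Nonempty ∧
    ∀ U V : Set (ℤ → Bool), IsOpen U → IsOpen V →
      (U ∩ Hset i j L).Nonempty → (V ∩ Hset i j L).Nonempty →
      ∃ N : ℕ, ∀ n ≥ N, (shift^[n] ⁻¹' U ∩ V ∩ Hset i j L).Nonempty := by
  refine ⟨⟨_, (isCountingFn_ramp (by omega) le_rfl hij.le hjL).ofIncrements_mem_Hset⟩, ?_⟩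
  rintro U V hU hV ⟨ξ, hξU, hξ⟩ ⟨η, hηV, hη⟩
  obtain ⟨K₁, hK₁⟩ := hU.exists_forall_natAbs_le_eq_imp_mem hξU
  obtain ⟨K₂, hK₂⟩ := hV.exists_forall_natAbs_le_eq_imp_mem hηV
  set K := max K₁ K₂
  refine ⟨2 * K + L * (4 * L + 2) + 1, fun n hn => ?_⟩
  have hn' : (2 * K + L * (4 * L + 2) + 1 : ℤ) ≤ n := by exact_mod_cast hn
  obtain ⟨ζ, hζ, hleft, hright⟩ := exists_mem_Hset_glue hij hjL (comp_add_mem_Hset hξ (-n)) hη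
    (a := K + 1) (b := n - K) (by omega)
  refine ⟨ζ, ⟨hK₁ _ fun t ht => ?_, hK₂ _ fun t ht => hleft t (by omega)⟩, hζ⟩
  rw [shift_iterate_apply, hright _ (by omega), add_neg_cancel_right]

/-- for `0 ≤ i < j ≤ L`, the subshift `H(i,j,L)` is nonempty, and the left
shift restricted to it is topologically mixing: for every pair of nonempty relatively
open subsets `U ∩ H`, `V ∩ H` of `H(i,j,L)` there is `N` such that
`σ^{-n}(U) ∩ V ∩ H ≠ ∅` for all `n ≥ N`. -/
theorem Hset_nonempty_and_topologically_mixing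
    (i j L : ℕ) (hL : 1 ≤ L) (hij : i < j) (hjL : j ≤ L) :
    (Hset i j L).Nonempty ∧
    ∀ U V : Set (ℤ → Bool), IsOpen U → IsOpen V →
      (U ∩ Hset i j L).Nonempty → (V ∩ Hset i j L).Nonempty →
      ∃ N : ℕ, ∀ n ≥ N, (shift^[n] ⁻¹' U ∩ V ∩ Hset i j L).Nonempty :=
  Hset_nonempty_and_topologically_mixing_general i j L hij hjL
end

section
/- Fix an integer c ≥ 1. There exist constants K₁, K₂ > 0 such that for every integer L ≥ c + 2 the following holds with j = L − c and i = j − 1: the limit h = lim_{n→∞} (1/n) log N(n) exists, where N(n) denotes the number of (i,j,L)-admissible words in {0,2}^n for n ≥ L, and K₁ (log L)/L ≤ h ≤ K₂ (log L)/L. -/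
/-- The number of `(i,j,L)`-admissible words in `{0,2}^n`. -/
noncomputable def numAdmissible (i j L n : ℕ) : ℕ :=
  Nat.card {w : Fin n → Bool // Admissible i j L (List.ofFn w)}

/-!
Write `N n` for the number of admissible words of length `n`. Counting zeros instead of twos,
a word is admissible iff each of its windows of length `L` contains `c` or `c + 1` zeros.
`N` is submultiplicative, so by Fekete's lemma `h = lim log (N n) / n` exists and
`h ≤ log (N L) / L`. A word of length `L` has at most `c + 1` zeros and is determined by their
positions, so `N L ≤ (L + 1) ^ (c + 1)`.

For the lower bound, every window of the `L`-periodic word `(2^(L-c) 0^c)^∞` has exactly `c`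
zeros. Inserting an extra zero into every other run of twos, at any of its `L - c` positions,
keeps every window at `c` or `c + 1` zeros, because the inserted zeros are more than `L` apart.
This gives `(L - c) ^ q` admissible words of length `q (2L + 1)`, hence
`h ≥ log (L - c) / (2L + 1)`, and `L ≤ (L - c) ^ (c + 1)` turns this into
`h ≥ log L / (3 (c + 1) L)`.
-/

section General

open Filter Finset

theorem Finset.exists_fin_option_mem_iff {α : Type*} {s : Finset α} {k : ℕ} (hs : #s ≤ k) :
    ∃ f : Fin k → Option α, ∀ a, a ∈ s ↔ ∃ j, f j = some a := by
  refine ⟨fun j => s.toList[(j : ℕ)]?, fun a => ?_⟩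
  rw [← Finset.mem_toList, List.mem_iff_getElem?]
  refine ⟨fun ⟨n, hn⟩ => ⟨⟨n, ?_⟩, hn⟩, fun ⟨j, hj⟩ => ⟨j, hj⟩⟩
  have := (List.getElem?_eq_some_iff.1 hn).1
  rw [Finset.length_toList] at this
  omega

theorem card_subtype_le_pow_of_card_false_le {n k : ℕ} (P : (Fin n → Bool) → Prop)
    (hP : ∀ w, P w → #{x | w x = false} ≤ k) : Nat.card {w // P w} ≤ (n + 1) ^ k := by
  choose f hf using fun w : {w // P w} => Finset.exists_fin_option_mem_iff (hP w.1 w.2)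
  calc Nat.card {w // P w} ≤ Nat.card (Fin k → Option (Fin n)) :=
        Nat.card_le_card_of_injective f fun v w h => Subtype.ext <| funext fun x => ?_
    _ = (n + 1) ^ k := by simp
  have := (hf v x).trans ((hf w x).trans (by rw [h])).symm
  simpa using this

theorem List.count_false_take_false_cons (l : List Bool) (t : ℕ) :
    ((false :: l).take t).count false = min t 1 + (l.take (t - 1)).count false := by
  cases t <;> simp; omega

theorem Subadditive.div_le_lim {u : ℕ → ℝ} (hu : Subadditive u)
    (hbdd : BddBelow (Set.range fun n => u n / n)) {p : ℕ} (hp : p ≠ 0) {b : ℝ}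
    (hb : ∀ q : ℕ, q * b ≤ u (q * p)) : b / p ≤ hu.lim := by
  have hmul : Tendsto (fun q => q * p) atTop atTop :=
    tendsto_atTop_mono (fun q => Nat.le_mul_of_pos_right q (Nat.pos_of_ne_zero hp)) tendsto_id
  refine ge_of_tendsto ((hu.tendsto_lim hbdd).comp hmul)
    (eventually_atTop.2 ⟨1, fun q hq => ?_⟩)
  have hqR : (0 : ℝ) < q := by exact_mod_cast hq
  have hpR : (0 : ℝ) < p := by exact_mod_cast Nat.pos_of_ne_zero hp
  rw [Function.comp_apply, Nat.cast_mul, div_le_div_iff₀ hpR (by positivity)]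
  nlinarith [hb q]

theorem subadditive_log_of_submultiplicative {N : ℕ → ℕ} (hpos : ∀ n, 0 < N n)
    (hmul : ∀ m n, N (m + n) ≤ N m * N n) : Subadditive fun n => Real.log (N n) := fun m n => by
  have hm : (0 : ℝ) < N m := by exact_mod_cast hpos m
  have hn : (0 : ℝ) < N n := by exact_mod_cast hpos n
  rw [← Real.log_mul hm.ne' hn.ne']
  exact Real.log_le_log (by exact_mod_cast hpos _) (by exact_mod_cast hmul m n)

theorem bddBelow_log_div (N : ℕ → ℕ) : BddBelow (Set.range fun n => Real.log (N n) / n) :=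
  ⟨0, by rintro _ ⟨n, rfl⟩; exact div_nonneg (Real.log_natCast_nonneg _) n.cast_nonneg⟩

theorem Nat.add_le_pow_succ {x : ℕ} (hx : 2 ≤ x) (c : ℕ) : x + c ≤ x ^ (c + 1) := by
  induction c with
  | zero => simp
  | succ c ih => rw [pow_succ]; nlinarith

end General

def winZeroCount (w : List Bool) (m L : ℕ) : ℕ := ((w.drop m).take L).count false

theorem winZeroCount_add (w : List Bool) (m L : ℕ) :
    (w.take m).count false + winZeroCount w m L = (w.take (m + L)).count false := by
  rw [winZeroCount, List.take_add, List.count_append]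

theorem winZeroCount_append_of_le {u : List Bool} (v : List Bool) {m L : ℕ}
    (h : m + L ≤ u.length) : winZeroCount (u ++ v) m L = winZeroCount u m L := by
  rw [winZeroCount, winZeroCount, List.drop_append_of_le_length (by omega),
    List.take_append_of_le_length (by simp; omega)]

theorem winZeroCount_length_add_append (u v : List Bool) (m L : ℕ) :
    winZeroCount (u ++ v) (u.length + m) L = winZeroCount v m L := by
  rw [winZeroCount, winZeroCount, List.drop_length_add_append]

theorem admissible_iff_winZeroCount {i j L : ℕ} {w : List Bool} (hi : i ≤ L) :
    Admissible i j L w ↔ ∀ m, m + L ≤ w.length →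
      L - j ≤ winZeroCount w m L ∧ winZeroCount w m L ≤ L - i := by
  refine forall₂_congr fun m hm => ?_
  have hlen : ((w.drop m).take L).length = L := by simp; omega
  have := List.count_not_add_count ((w.drop m).take L) false
  rw [hlen, Bool.not_false] at this
  rw [winCount, winZeroCount]
  omega

namespace Admissible

variable {i j L : ℕ} {w : List Bool}

theorem take (h : Admissible i j L w) (n : ℕ) : Admissible i j L (w.take n) := by
  intro m hm
  rw [List.length_take] at hm
  rw [winCount, List.drop_take, List.take_take, min_eq_left (by omega)]
  exact h m (by omega)

theorem drop (hL : 0 < L) (h : Admissible i j L w) (n : ℕ) : Admissible i j L (w.drop n) := by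
  intro m hm
  rw [List.length_drop] at hm
  rw [winCount, List.drop_drop]
  exact h (n + m) (by omega)

theorem count_false_le (h : Admissible i j L w) (hw : w.length = L) : w.count false ≤ L - i := by
  have h0 := h 0 (by omega)
  have := List.count_not_add_count w false
  rw [winCount, List.drop_zero, List.take_of_length_le hw.le] at h0
  rw [Bool.not_false] at this
  omega

end Admissible

theorem numAdmissible_eq_card_list (i j L n : ℕ) :
    numAdmissible i j L n = Nat.card {w : List Bool // w.length = n ∧ Admissible i j L w} := by
  refine Nat.card_congr
    (.ofBijective (fun w => ⟨List.ofFn w.1, List.length_ofFn, w.2⟩) ⟨?_, ?_⟩)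
  · exact fun v w h => Subtype.ext (List.ofFn_injective (congrArg Subtype.val h))
  · rintro ⟨w, rfl, hw⟩
    exact ⟨⟨fun k => w[k], by simpa using hw⟩, by simp⟩

instance (i j L n : ℕ) : Finite {w : List Bool // w.length = n ∧ Admissible i j L w} :=
  ((List.finite_length_eq Bool n).subset fun _ hw => hw.1).to_subtype

theorem numAdmissible_add_le {i j L : ℕ} (hL : 0 < L) (a b : ℕ) :
    numAdmissible i j L (a + b) ≤ numAdmissible i j L a * numAdmissible i j L b := by
  simp only [numAdmissible_eq_card_list, ← Nat.card_prod]
  refine Nat.card_le_card_of_injective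
    (fun w => (⟨w.1.take a, by simp [w.2.1], w.2.2.take a⟩,
      ⟨w.1.drop a, by simp [w.2.1], w.2.2.drop hL a⟩)) fun v w h => ?_
  simp only [Prod.mk.injEq, Subtype.mk.injEq] at h
  exact Subtype.ext (by rw [← v.1.take_append_drop a, h.1, h.2, w.1.take_append_drop])

open Finset in
theorem numAdmissible_le_pow (i j L : ℕ) : numAdmissible i j L L ≤ (L + 1) ^ (L - i) :=
  card_subtype_le_pow_of_card_false_le _ fun w hw => by
    have := Fin.card_filter_univ_eq_vector_get_eq_count false (List.Vector.ofFn w)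
    simp only [List.Vector.get_ofFn, List.Vector.toList_ofFn] at this
    exact this ▸ hw.count_false_le List.length_ofFn

section Blocks

open List

variable {L c : ℕ}

def period (L c : ℕ) : List Bool := replicate (L - c) true ++ replicate c false

def markedPeriod (L c e : ℕ) : List Bool :=
  replicate e true ++ false :: replicate (L - c - e) true ++ replicate c false

theorem length_period (hc : c ≤ L) : (period L c).length = L := by
  simp [period]; omega

theorem length_markedPeriod {e : ℕ} (he : e < L - c) : (markedPeriod L c e).length = L + 1 := by
  simp [markedPeriod]; omega

theorem count_false_take_period (t : ℕ) :
    ((period L c).take t).count false = min (t - (L - c)) c := by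
  simp [period, take_append, take_replicate, count_replicate]

theorem count_false_take_markedPeriod {e : ℕ} (he : e < L - c) (t : ℕ) :
    ((markedPeriod L c e).take t).count false = min (t - e) 1 + min (t - (L - c + 1)) c := by
  simp [markedPeriod, take_append, take_replicate, count_replicate, count_false_take_false_cons]
  omega

theorem winZeroCount_markedPeriod_append_period {e m : ℕ} (he : e < L - c)
    (hm : m ≤ L + 1) :
    c ≤ winZeroCount (markedPeriod L c e ++ period L c) m L ∧
      winZeroCount (markedPeriod L c e ++ period L c) m L ≤ c + 1 := by
  have h := winZeroCount_add (markedPeriod L c e ++ period L c) m L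
  have hA := length_markedPeriod (L := L) (c := c) he
  have hmA : m ≤ (markedPeriod L c e).length := by omega
  rw [take_append_of_le_length hmA, take_append, count_append, hA,
    count_false_take_markedPeriod he, count_false_take_period,
    count_false_take_markedPeriod he] at h
  omega

theorem winZeroCount_period_append_markedPeriod {e m : ℕ} (he : e < L - c)
    (hm : m ≤ L) :
    c ≤ winZeroCount (period L c ++ markedPeriod L c e) m L ∧
      winZeroCount (period L c ++ markedPeriod L c e) m L ≤ c + 1 := by
  have h := winZeroCount_add (period L c ++ markedPeriod L c e) m L
  have hA := length_period (L := L) (c := c) (by omega)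
  have hmA : m ≤ (period L c).length := by omega
  rw [take_append_of_le_length hmA, take_append, count_append, hA,
    count_false_take_markedPeriod he, count_false_take_period,
    count_false_take_period] at h
  omega

def blockWord (L c : ℕ) (es : List (Fin (L - c))) : List Bool :=
  es.flatMap fun e => markedPeriod L c e ++ period L c

theorem blockWord_nil : blockWord L c [] = [] := rfl

theorem blockWord_cons (e : Fin (L - c)) (es : List (Fin (L - c))) :
    blockWord L c (e :: es) = markedPeriod L c e ++ (period L c ++ blockWord L c es) := by
  simp [blockWord]

theorem length_blockWord (es : List (Fin (L - c))) :
    (blockWord L c es).length = es.length * (2 * L + 1) := by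
  induction es with
  | nil => simp [blockWord_nil]
  | cons e es ih =>
    rw [blockWord_cons, length_append, length_append, length_markedPeriod e.isLt,
      length_period (by have := e.isLt; omega), ih, length_cons]
    ring

theorem winZeroCount_blockWord (hcL : c < L) {es : List (Fin (L - c))} {m : ℕ}
    (hm : m + L ≤ (blockWord L c es).length) :
    c ≤ winZeroCount (blockWord L c es) m L ∧
      winZeroCount (blockWord L c es) m L ≤ c + 1 := by
  induction es generalizing m with
  | nil => rw [blockWord_nil, length_nil] at hm; omega
  | cons e es ih =>
    have hM := length_markedPeriod e.isLt
    have hP := length_period (L := L) (c := c) hcL.le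
    rw [blockWord_cons] at hm ⊢
    rcases le_or_gt m L with hmL | hmL
    · rw [← append_assoc, winZeroCount_append_of_le _ (by simp; omega)]
      exact winZeroCount_markedPeriod_append_period e.isLt (by omega)
    obtain ⟨m, rfl⟩ : ∃ m', m = (markedPeriod L c e).length + m' :=
      ⟨m - (L + 1), by omega⟩
    rw [winZeroCount_length_add_append]
    rcases le_or_gt L m with hmL' | hmL'
    · obtain ⟨m, rfl⟩ : ∃ m', m = (period L c).length + m' := ⟨m - L, by omega⟩
      rw [winZeroCount_length_add_append]
      exact ih (by simp only [length_append] at hm; omega)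
    cases es with
    | nil =>
      rw [blockWord_nil, append_nil] at hm ⊢
      rw [length_append] at hm
      rw [← winZeroCount_append_of_le (markedPeriod L c 0) (by omega)]
      exact winZeroCount_period_append_markedPeriod (by omega) (by omega)
    | cons e' es =>
      have hM' := length_markedPeriod e'.isLt
      rw [blockWord_cons, ← append_assoc,
        winZeroCount_append_of_le (u := period L c ++ markedPeriod L c e') _
          (by simp only [length_append]; omega)]
      exact winZeroCount_period_append_markedPeriod e'.isLt hmL'.le

theorem admissible_blockWord (hcL : c < L) (es : List (Fin (L - c))) :
    Admissible (L - c - 1) (L - c) L (blockWord L c es) :=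
  (admissible_iff_winZeroCount (by omega)).2 fun _ hm => by
    have := winZeroCount_blockWord hcL hm
    omega

theorem markedPeriod_injective {e e' : ℕ} (he : e < L - c) (he' : e' < L - c)
    (h : markedPeriod L c e = markedPeriod L c e') : e = e' := by
  have h₁ := congrArg (fun w => (w.take (e + 1)).count false) h
  have h₂ := congrArg (fun w => (w.take (e' + 1)).count false) h
  simp only [count_false_take_markedPeriod he, count_false_take_markedPeriod he'] at h₁ h₂
  omega

theorem blockWord_injective : Function.Injective (blockWord L c) := by
  intro es es' h
  induction es generalizing es' with
  | nil =>
    cases es' with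
    | nil => rfl
    | cons e' es' => simp [blockWord_nil, blockWord_cons, markedPeriod] at h
  | cons e es ih =>
    cases es' with
    | nil => simp [blockWord_nil, blockWord_cons, markedPeriod] at h
    | cons e' es' =>
      rw [blockWord_cons, blockWord_cons] at h
      obtain ⟨hM, hrest⟩ := append_inj h
        (by rw [length_markedPeriod e.isLt, length_markedPeriod e'.isLt])
      rw [Fin.ext (markedPeriod_injective e.isLt e'.isLt hM), ih (append_cancel_left hrest)]

end Blocks

theorem pow_le_numAdmissible {L c : ℕ} (hcL : c < L) (q : ℕ) :
    (L - c) ^ q ≤ numAdmissible (L - c - 1) (L - c) L (q * (2 * L + 1)) := by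
  rw [numAdmissible_eq_card_list]
  calc (L - c) ^ q = Nat.card (Fin q → Fin (L - c)) := by simp
    _ ≤ _ := Nat.card_le_card_of_injective
        (fun a => ⟨blockWord L c (List.ofFn a), by simp [length_blockWord],
          admissible_blockWord hcL _⟩)
        fun a b h => List.ofFn_injective (blockWord_injective (congrArg Subtype.val h))

theorem numAdmissible_pos {L c : ℕ} (hcL : c < L) (n : ℕ) :
    0 < numAdmissible (L - c - 1) (L - c) L n := by
  have hpow := pow_le_numAdmissible hcL n
  have hmul :=
    numAdmissible_add_le (i := L - c - 1) (j := L - c) (L := L) (by omega) n (n * (2 * L))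
  rw [show n + n * (2 * L) = n * (2 * L + 1) by ring] at hmul
  have : 0 < (L - c) ^ n := Nat.pow_pos (by omega)
  exact Nat.pos_of_ne_zero fun h => by simp [h] at hmul; omega

theorem log_le_succ_mul_log_sub {L c : ℕ} (hL : c + 2 ≤ L) :
    Real.log L ≤ (c + 1) * Real.log (L - c : ℕ) := by
  have h := Nat.add_le_pow_succ (x := L - c) (by omega) c
  rw [Nat.sub_add_cancel (by omega)] at h
  rw [← Nat.cast_succ, ← Real.log_pow, ← Nat.cast_pow]
  exact Real.log_le_log (by exact_mod_cast (show 0 < L by omega)) (by exact_mod_cast h)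

theorem log_div_le_log_sub_div {L c : ℕ} (hL : c + 2 ≤ L) :
    1 / (3 * (c + 1)) * Real.log L / L ≤ Real.log (L - c : ℕ) / (2 * L + 1 : ℕ) := by
  have hlog := log_le_succ_mul_log_sub hL
  have hL1 : (1 : ℝ) ≤ L := by exact_mod_cast (show 1 ≤ L by omega)
  calc 1 / (3 * (c + 1)) * Real.log L / L ≤ Real.log (L - c : ℕ) / (3 * L) := by
        rw [div_le_div_iff₀ (by positivity) (by positivity)]
        field_simp
        nlinarith [Real.log_natCast_nonneg L]
    _ ≤ Real.log (L - c : ℕ) / (2 * L + 1 : ℕ) := by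
        gcongr
        push_cast
        linarith

theorem mul_log_le_log_numAdmissible {L c : ℕ} (hcL : c < L) (q : ℕ) :
    q * Real.log (L - c : ℕ) ≤
      Real.log (numAdmissible (L - c - 1) (L - c) L (q * (2 * L + 1))) := by
  rw [← Real.log_pow, ← Nat.cast_pow]
  exact Real.log_le_log (by exact_mod_cast Nat.pow_pos (by omega))
    (by exact_mod_cast pow_le_numAdmissible hcL q)

theorem log_numAdmissible_le {L c : ℕ} (hL : c + 2 ≤ L) :
    Real.log (numAdmissible (L - c - 1) (L - c) L L) ≤ 2 * (c + 1) * Real.log L := by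
  have h := numAdmissible_le_pow (L - c - 1) (L - c) L
  rw [show L - (L - c - 1) = c + 1 by omega] at h
  have hsq : L + 1 ≤ L ^ 2 := by nlinarith
  have := h.trans (Nat.pow_le_pow_left hsq (c + 1))
  rw [← pow_mul] at this
  calc Real.log (numAdmissible (L - c - 1) (L - c) L L) ≤ Real.log ((L : ℝ) ^ (2 * (c + 1))) :=
        Real.log_le_log (by exact_mod_cast numAdmissible_pos (by omega) L)
          (by exact_mod_cast this)
    _ = 2 * (c + 1) * Real.log L := by rw [Real.log_pow]; push_cast; ring

theorem entropy_estimate_general (c : ℕ) :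
    ∃ K₁ : ℝ, 0 < K₁ ∧ ∃ K₂ : ℝ, 0 < K₂ ∧
      ∀ L : ℕ, c + 2 ≤ L →
        ∃ h : ℝ,
          Filter.Tendsto
            (fun n : ℕ => Real.log (numAdmissible (L - c - 1) (L - c) L n) / n)
            Filter.atTop (nhds h) ∧
          K₁ * Real.log L / L ≤ h ∧ h ≤ K₂ * Real.log L / L := by
  refine ⟨1 / (3 * (c + 1)), by positivity, 2 * (c + 1), by positivity, fun L hL => ?_⟩
  have hcL : c < L := by omega
  have hsub := subadditive_log_of_submultiplicative (numAdmissible_pos hcL)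
    (numAdmissible_add_le (i := L - c - 1) (j := L - c) (by omega))
  have hbdd := bddBelow_log_div (numAdmissible (L - c - 1) (L - c) L)
  refine ⟨hsub.lim, hsub.tendsto_lim hbdd, ?_, ?_⟩
  · calc 1 / (3 * (c + 1)) * Real.log L / L ≤ Real.log (L - c : ℕ) / (2 * L + 1 : ℕ) :=
          log_div_le_log_sub_div hL
      _ ≤ hsub.lim := hsub.div_le_lim hbdd (by omega) (mul_log_le_log_numAdmissible hcL)
  · calc hsub.lim ≤ Real.log (numAdmissible (L - c - 1) (L - c) L L) / L :=
          hsub.lim_le_div hbdd (by omega)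
      _ ≤ 2 * (c + 1) * Real.log L / L := by gcongr; exact log_numAdmissible_le hL

/-- Proposition on entropy estimates: fix `c ≥ 1`.  There are constants
`K₁, K₂ > 0` such that for every `L ≥ c + 2`, with `j = L − c` and `i = j − 1`, the
entropy `h = lim (1/n) log N(n)` of the `(i,j,L)`-admissible words exists and satisfies
`K₁ (log L)/L ≤ h ≤ K₂ (log L)/L`. -/
theorem entropy_estimate (c : ℕ) (hc : 1 ≤ c) :
    ∃ K₁ : ℝ, 0 < K₁ ∧ ∃ K₂ : ℝ, 0 < K₂ ∧
      ∀ L : ℕ, c + 2 ≤ L →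
        ∃ h : ℝ,
          Filter.Tendsto
            (fun n : ℕ => Real.log (numAdmissible (L - c - 1) (L - c) L n) / n)
            Filter.atTop (nhds h) ∧
          K₁ * Real.log L / L ≤ h ∧ h ≤ K₂ * Real.log L / L :=
  entropy_estimate_general c
end

section
/- With the sets G₁, …, G_k and ℍ as in the context: if ξ ∈ ℍ ∩ G_ℓ for some ℓ ∈ {1, …, k}, then σ^s(ξ) ∉ G_n for every n ∈ {1, …, k} with n ≠ ℓ and every integer s ≥ 0. -/
/-- The shift by `s ∈ ℤ` on `{0,2}^ℤ` (`zshift 1` is the left shift `σ`). -/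
def zshift (s : ℤ) (ξ : ℤ → Bool) : ℤ → Bool := fun n => ξ (n + s)

/-- The finite word `ξ₀ ξ₁ ⋯ ξ_{L−1}` of a bi-infinite sequence `ξ`. -/
def initialWord (L : ℕ) (ξ : ℤ → Bool) : List Bool :=
  List.ofFn fun r : Fin L => ξ ((r : ℕ) : ℤ)

/-!
Count the `0`s in windows. Membership in `G n` pins the number of `0`s among the first `L n`
letters to the band `[3(k-n)+4, 3(k-n)+5]` (for `n = 1` only the lower end `3k+1`). This count
grows with the window length and changes by at most one under a single shift, and the band of
`m` lies at least two above the band of any `m' > m`; hence `σ^s ξ` and `σ^(s+1) ξ` can never lie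
in different `G`s. As every shift of `ξ ∈ ℍ` lies in some `G m`, induction on `s` keeps `σ^s ξ`
in `G ℓ`, and the bands of `G ℓ` and `G n` are disjoint.
-/

lemma zshift_zero (ξ : ℤ → Bool) : zshift 0 ξ = ξ := by
  funext n; simp [zshift]

lemma zshift_one_zshift (s : ℤ) (ξ : ℤ → Bool) : zshift 1 (zshift s ξ) = zshift (s + 1) ξ := by
  funext n; simp [zshift, add_assoc, add_comm 1 s]

lemma length_initialWord (L : ℕ) (ζ : ℤ → Bool) : (initialWord L ζ).length = L := by
  simp [initialWord]

lemma initialWord_succ (n : ℕ) (ζ : ℤ → Bool) :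
    initialWord (n + 1) ζ = ζ 0 :: initialWord n (zshift 1 ζ) := by
  simp [initialWord, List.ofFn_succ, zshift]

lemma initialWord_succ' (n : ℕ) (ζ : ℤ → Bool) :
    initialWord (n + 1) ζ = initialWord n ζ ++ [ζ n] := by
  simp only [initialWord, List.ofFn_succ', List.concat_eq_append, Fin.val_castSucc, Fin.val_last]

def zeroCount (ζ : ℤ → Bool) (n : ℕ) : ℕ := (initialWord n ζ).count false

lemma zeroCount_succ (ζ : ℤ → Bool) (n : ℕ) :
    zeroCount ζ (n + 1) = zeroCount ζ n + (if ζ n then 0 else 1) := by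
  cases h : ζ n <;> simp [zeroCount, initialWord_succ', h]

lemma zeroCount_succ' (ζ : ℤ → Bool) (n : ℕ) :
    zeroCount ζ (n + 1) = zeroCount (zshift 1 ζ) n + (if ζ 0 then 0 else 1) := by
  cases h : ζ 0 <;> simp [zeroCount, initialWord_succ, h]

lemma zeroCount_mono (ζ : ℤ → Bool) : Monotone (zeroCount ζ) :=
  monotone_nat_of_le_succ fun n => by rw [zeroCount_succ]; omega

lemma zeroCount_zshift_one_le (ζ : ℤ → Bool) (n : ℕ) :
    zeroCount (zshift 1 ζ) n ≤ zeroCount ζ n + 1 := by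
  have := zeroCount_succ ζ n
  have := zeroCount_succ' ζ n
  split_ifs at * <;> omega

lemma zeroCount_le_zshift_one (ζ : ℤ → Bool) (n : ℕ) :
    zeroCount ζ n ≤ zeroCount (zshift 1 ζ) n + 1 := by
  have := zeroCount_succ ζ n
  have := zeroCount_succ' ζ n
  split_ifs at * <;> omega

-- Stated additively, since `count true = L - zeroCount ζ L` would need truncated subtraction.
lemma admissible_initialWord_iff {i j L : ℕ} {ζ : ℤ → Bool} :
    Admissible i j L (initialWord L ζ) ↔ i + zeroCount ζ L ≤ L ∧ L ≤ j + zeroCount ζ L := by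
  have hsum := List.count_true_add_count_false (initialWord L ζ)
  rw [length_initialWord] at hsum
  have hwin : winCount (initialWord L ζ) 0 L = (initialWord L ζ).count true := by
    rw [winCount, List.drop_zero, List.take_of_length_le (length_initialWord L ζ).le]
  constructor
  · intro h
    have := h 0 (by simp [length_initialWord])
    rw [zeroCount]
    omega
  · rintro h m hm
    obtain rfl : m = 0 := by rw [length_initialWord] at hm; omega
    rw [zeroCount] at h
    omega

def ZeroBands (k : ℕ) (L : ℕ → ℕ) (G : ℕ → Set (ℤ → Bool)) : Prop :=
  ∀ n ∈ Set.Icc 1 k, ∀ ζ ∈ G n,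
    3 * (k - n) + 4 ≤ zeroCount ζ (L n) ∧ (2 ≤ n → zeroCount ζ (L n) ≤ 3 * (k - n) + 5)

lemma zeroBands_of_admissible {k : ℕ} {L i j : ℕ → ℕ} {G : ℕ → Set (ℤ → Bool)}
    (hL1 : 3 * k + 1 < L 1) (hj1 : j 1 = L 1 - (3 * k + 1))
    (hj : ∀ ℓ, 2 ≤ ℓ → ℓ ≤ k → j ℓ = L ℓ - (3 * (k - ℓ) + 4))
    (hi : ∀ ℓ, 2 ≤ ℓ → ℓ ≤ k → i ℓ = j ℓ - 1)
    (hipos : ∀ ℓ, 2 ≤ ℓ → ℓ ≤ k → 1 ≤ i ℓ)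
    (hG : ∀ ℓ, G ℓ = {ξ | Admissible (i ℓ) (j ℓ) (L ℓ) (initialWord (L ℓ) ξ)}) :
    ZeroBands k L G := by
  rintro n ⟨hn1, hnk⟩ ζ hζ
  rw [hG] at hζ
  replace hζ := admissible_initialWord_iff.mp hζ
  obtain rfl | hn2 : n = 1 ∨ 2 ≤ n := by omega
  · omega
  · have := hj n hn2 hnk
    have := hi n hn2 hnk
    have := hipos n hn2 hnk
    omega

namespace ZeroBands

variable {k : ℕ} {L : ℕ → ℕ} {G : ℕ → Set (ℤ → Bool)}

lemma false_of_lt (hB : ZeroBands k L G) (hL : MonotoneOn L (Set.Icc 1 k)) {m m' : ℕ}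
    (hm : 1 ≤ m) (hmm' : m < m') (hm'k : m' ≤ k) {ζ η : ℤ → Bool} (hζ : ζ ∈ G m)
    (hη : η ∈ G m') (hnear : ∀ n, zeroCount ζ n ≤ zeroCount η n + 1) : False := by
  have hlow := (hB m ⟨hm, by omega⟩ ζ hζ).1
  have hup := (hB m' ⟨by omega, hm'k⟩ η hη).2 (by omega)
  have hwin := zeroCount_mono ζ (hL ⟨hm, by omega⟩ ⟨by omega, hm'k⟩ hmm'.le)
  have := hnear (L m')
  omega

lemma eq_of_near (hB : ZeroBands k L G) (hL : MonotoneOn L (Set.Icc 1 k)) {m m' : ℕ}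
    (hm : m ∈ Set.Icc 1 k) (hm' : m' ∈ Set.Icc 1 k) {ζ η : ℤ → Bool} (hζ : ζ ∈ G m)
    (hη : η ∈ G m') (hζη : ∀ n, zeroCount ζ n ≤ zeroCount η n + 1)
    (hηζ : ∀ n, zeroCount η n ≤ zeroCount ζ n + 1) : m = m' := by
  rcases lt_trichotomy m m' with h | h | h
  · exact (hB.false_of_lt hL hm.1 h hm'.2 hζ hη hζη).elim
  · exact h
  · exact (hB.false_of_lt hL hm'.1 h hm.2 hη hζ hηζ).elim

lemma zshift_natCast_mem (hB : ZeroBands k L G) (hL : MonotoneOn L (Set.Icc 1 k))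
    {ξ : ℤ → Bool} (hξ : ∀ s : ℤ, ∃ m, 1 ≤ m ∧ m ≤ k ∧ zshift s ξ ∈ G m) {ℓ : ℕ}
    (hℓ : ℓ ∈ Set.Icc 1 k) (h₀ : ξ ∈ G ℓ) : ∀ s : ℕ, zshift s ξ ∈ G ℓ
  | 0 => by rwa [Nat.cast_zero, zshift_zero]
  | s + 1 => by
    obtain ⟨m, hm1, hmk, hm⟩ := hξ (s + 1)
    rw [← zshift_one_zshift] at hm
    obtain rfl := hB.eq_of_near hL hℓ ⟨hm1, hmk⟩ (zshift_natCast_mem hB hL hξ hℓ h₀ s) hm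
      (zeroCount_le_zshift_one _) (zeroCount_zshift_one_le _)
    rwa [Nat.cast_succ, ← zshift_one_zshift]

end ZeroBands

theorem forward_orbit_stays_in_Gl_general
    (k : ℕ) (L i j : ℕ → ℕ)
    (hLmono : ∀ ℓ, 1 ≤ ℓ → ℓ < k → L ℓ < L (ℓ + 1))
    (hL1 : 3 * k + 1 < L 1)
    (hj1 : j 1 = L 1 - (3 * k + 1))
    (hj : ∀ ℓ, 2 ≤ ℓ → ℓ ≤ k → j ℓ = L ℓ - (3 * (k - ℓ) + 4))
    (hi : ∀ ℓ, 2 ≤ ℓ → ℓ ≤ k → i ℓ = j ℓ - 1)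
    (hipos : ∀ ℓ, 2 ≤ ℓ → ℓ ≤ k → 1 ≤ i ℓ)
    (G : ℕ → Set (ℤ → Bool))
    (hG : ∀ ℓ, G ℓ = {ξ | Admissible (i ℓ) (j ℓ) (L ℓ) (initialWord (L ℓ) ξ)})
    (H : Set (ℤ → Bool))
    (hH : H = {ξ | ∀ s : ℤ, ∃ ℓ, 1 ≤ ℓ ∧ ℓ ≤ k ∧ zshift s ξ ∈ G ℓ})
    (ℓ : ℕ) (hℓ1 : 1 ≤ ℓ) (hℓk : ℓ ≤ k)
    (ξ : ℤ → Bool) (hξ : ξ ∈ H ∩ G ℓ) :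
    ∀ n, 1 ≤ n → n ≤ k → n ≠ ℓ → ∀ s : ℕ, zshift (s : ℤ) ξ ∉ G n := by
  obtain ⟨hξH, hξG⟩ := hξ
  rw [hH] at hξH
  have hB : ZeroBands k L G := zeroBands_of_admissible hL1 hj1 hj hi hipos hG
  have hLmon : MonotoneOn L (Set.Icc 1 k) :=
    monotoneOn_of_le_add_one Set.ordConnected_Icc fun a _ ha ha' => (hLmono a ha.1 ha'.2).le
  intro n hn1 hnk hne s hs
  exact hne <| hB.eq_of_near hLmon ⟨hn1, hnk⟩ ⟨hℓ1, hℓk⟩ hs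
    (hB.zshift_natCast_mem hLmon hξH ⟨hℓ1, hℓk⟩ hξG s) (fun _ => Nat.le_succ _)
    (fun _ => Nat.le_succ _)

/-- Lemma `l:hetero`: with `G₁, …, G_k` and `ℍ` as in the construction,
if `ξ ∈ ℍ ∩ G_ℓ` then `σ^s(ξ) ∉ G_n` for every `n ≠ ℓ` in `{1,…,k}` and every `s ≥ 0`. -/
theorem forward_orbit_stays_in_Gl
    (k : ℕ) (hk : 1 ≤ k) (L i j : ℕ → ℕ)
    (hLmono : ∀ ℓ, 1 ≤ ℓ → ℓ < k → L ℓ < L (ℓ + 1))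
    (hL1 : 3 * k + 1 < L 1)
    (hi1 : i 1 = 0) (hj1 : j 1 = L 1 - (3 * k + 1))
    (hj : ∀ ℓ, 2 ≤ ℓ → ℓ ≤ k → j ℓ = L ℓ - (3 * (k - ℓ) + 4))
    (hi : ∀ ℓ, 2 ≤ ℓ → ℓ ≤ k → i ℓ = j ℓ - 1)
    (hipos : ∀ ℓ, 2 ≤ ℓ → ℓ ≤ k → 1 ≤ i ℓ)
    (hLi : ∀ ℓ, 1 ≤ ℓ → ℓ < k → L ℓ < i (ℓ + 1))
    (G : ℕ → Set (ℤ → Bool))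
    (hG : ∀ ℓ, G ℓ = {ξ | Admissible (i ℓ) (j ℓ) (L ℓ) (initialWord (L ℓ) ξ)})
    (H : Set (ℤ → Bool))
    (hH : H = {ξ | ∀ s : ℤ, ∃ ℓ, 1 ≤ ℓ ∧ ℓ ≤ k ∧ zshift s ξ ∈ G ℓ})
    (ℓ : ℕ) (hℓ1 : 1 ≤ ℓ) (hℓk : ℓ ≤ k)
    (ξ : ℤ → Bool) (hξ : ξ ∈ H ∩ G ℓ) :
    ∀ n, 1 ≤ n → n ≤ k → n ≠ ℓ → ∀ s : ℕ, zshift (s : ℤ) ξ ∉ G n :=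
  forward_orbit_stays_in_Gl_general k L i j hLmono hL1 hj1 hj hi hipos G hG H hH ℓ hℓ1 hℓk ξ hξ
end

section
/- Let 0 ≤ i ≤ j ≤ L be integers with L ≥ 1 and let ξ ∈ H(i,j,L). Then i/L ≤ liminf_{n→∞} (1/n) #{0 ≤ m < n : ξ_m = 2} and limsup_{n→∞} (1/n) #{0 ≤ m < n : ξ_m = 2} ≤ j/L. -/
open Filter Topology Finset

section PrefixCount

variable (ξ : ℤ → Bool)

def prefixCount (n : ℕ) : ℕ :=
  ((range n).filter fun m : ℕ => ξ m = true).card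

lemma prefixCount_add (n L : ℕ) :
    prefixCount ξ (n + L) = prefixCount ξ n + zwinCount ξ n L := by
  simp only [prefixCount, zwinCount, card_filter, sum_range_add, Nat.cast_add]

lemma prefixCount_mono : Monotone (prefixCount ξ) := fun _ _ h =>
  card_le_card (filter_subset_filter _ (range_subset_range.2 h))

lemma prefixCount_le_self (n : ℕ) : prefixCount ξ n ≤ n :=
  (card_filter_le _ _).trans (card_range n).le

variable {ξ} {i j L : ℕ}

lemma prefixCount_mul_mem_Icc (hξ : ξ ∈ Hset i j L) (q : ℕ) :
    prefixCount ξ (q * L) ∈ Set.Icc (q * i) (q * j) := by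
  induction q with
  | zero => simp [prefixCount]
  | succ q ih =>
    have hwin := hξ (q * L : ℕ)
    rw [Set.mem_Icc] at ih ⊢
    rw [Nat.succ_mul q L, prefixCount_add, Nat.succ_mul q i, Nat.succ_mul q j]
    omega

lemma mul_le_prefixCount_add_mul (hL : 0 < L) (hξ : ξ ∈ Hset i j L) (n : ℕ) :
    i * n ≤ (prefixCount ξ n + i) * L := by
  have hwindows := (prefixCount_mul_mem_Icc hξ (n / L)).1.trans
    (prefixCount_mono ξ (Nat.div_mul_le_self n L))
  calc i * n ≤ i * (n / L * L + L) := Nat.mul_le_mul_left i (Nat.lt_div_mul_add hL).le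
    _ = (n / L * i + i) * L := by ring
    _ ≤ (prefixCount ξ n + i) * L := by gcongr

lemma prefixCount_mul_le (hL : 0 < L) (hξ : ξ ∈ Hset i j L) (n : ℕ) :
    prefixCount ξ n * L ≤ j * (n + L) := by
  have hcover : n ≤ (n / L + 1) * L := by rw [Nat.succ_mul]; exact (Nat.lt_div_mul_add hL).le
  have hwindows := (prefixCount_mono ξ hcover).trans (prefixCount_mul_mem_Icc hξ (n / L + 1)).2
  calc prefixCount ξ n * L ≤ (n / L + 1) * j * L := Nat.mul_le_mul_right L hwindows
    _ = j * (n / L * L + L) := by ring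
    _ ≤ j * (n + L) := by gcongr; exact Nat.div_mul_le_self n L

lemma div_sub_div_le_prefixCount_div (hL : 0 < L) (hξ : ξ ∈ Hset i j L) {n : ℕ} (hn : 0 < n) :
    (i : ℝ) / L - i / n ≤ prefixCount ξ n / n := by
  rw [sub_le_iff_le_add, ← add_div, div_le_div_iff₀ (by positivity) (by positivity)]
  exact_mod_cast mul_le_prefixCount_add_mul hL hξ n

lemma prefixCount_div_le_div_add_div (hL : 0 < L) (hξ : ξ ∈ Hset i j L) {n : ℕ} (hn : 0 < n) :
    (prefixCount ξ n : ℝ) / n ≤ j / L + j / n := by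
  rw [← sub_le_iff_le_add, ← sub_div, div_le_div_iff₀ (by positivity) (by positivity)]
  have hcount : (prefixCount ξ n : ℝ) * L ≤ j * (n + L) := by
    exact_mod_cast prefixCount_mul_le hL hξ n
  linarith

end PrefixCount

lemma le_liminf_of_eventually_sub_div_le {u : ℕ → ℝ} {c C : ℝ}
    (hu : IsBoundedUnder (· ≤ ·) atTop u) (h : ∀ᶠ n : ℕ in atTop, c - C / n ≤ u n) :
    c ≤ liminf u atTop := by
  have hlim : Tendsto (fun n : ℕ => c - C / n) atTop (𝓝 c) := by
    simpa using tendsto_const_nhds.sub (tendsto_const_div_atTop_nhds_zero_nat C)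
  calc c = liminf (fun n : ℕ => c - C / n) atTop := hlim.liminf_eq.symm
    _ ≤ liminf u atTop := liminf_le_liminf h hlim.isBoundedUnder_ge hu.isCoboundedUnder_ge

lemma limsup_le_of_eventually_le_add_div {u : ℕ → ℝ} {c C : ℝ}
    (hu : IsBoundedUnder (· ≥ ·) atTop u) (h : ∀ᶠ n : ℕ in atTop, u n ≤ c + C / n) :
    limsup u atTop ≤ c := by
  have hlim : Tendsto (fun n : ℕ => c + C / n) atTop (𝓝 c) := by
    simpa using tendsto_const_nhds.add (tendsto_const_div_atTop_nhds_zero_nat C)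
  calc limsup u atTop ≤ limsup (fun n : ℕ => c + C / n) atTop :=
        limsup_le_limsup h hu.isCoboundedUnder_le hlim.isBoundedUnder_le
    _ = c := hlim.limsup_eq

theorem frequency_bounds_general
    (i j L : ℕ) (hL : 1 ≤ L)
    (ξ : ℤ → Bool) (hξ : ξ ∈ Hset i j L) :
    (i : ℝ) / L ≤
      Filter.liminf
        (fun n : ℕ =>
          (((Finset.range n).filter fun m : ℕ => ξ ((m : ℕ) : ℤ) = true).card : ℝ) / n)
        Filter.atTop ∧
    Filter.limsup
        (fun n : ℕ =>
          (((Finset.range n).filter fun m : ℕ => ξ ((m : ℕ) : ℤ) = true).card : ℝ) / n)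
        Filter.atTop ≤ (j : ℝ) / L := by
  change (i : ℝ) / L ≤ liminf (fun n : ℕ => (prefixCount ξ n : ℝ) / n) atTop ∧
    limsup (fun n : ℕ => (prefixCount ξ n : ℝ) / n) atTop ≤ (j : ℝ) / L
  have hfreq_nonneg (n : ℕ) : 0 ≤ (prefixCount ξ n : ℝ) / n := by positivity
  have hfreq_le_one (n : ℕ) : (prefixCount ξ n : ℝ) / n ≤ 1 :=
    div_le_one_of_le₀ (by exact_mod_cast prefixCount_le_self ξ n) n.cast_nonneg
  exact ⟨le_liminf_of_eventually_sub_div_le (isBoundedUnder_of ⟨1, hfreq_le_one⟩)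
      (eventually_gt_atTop 0 |>.mono fun n => div_sub_div_le_prefixCount_div hL hξ),
    limsup_le_of_eventually_le_add_div (isBoundedUnder_of ⟨0, hfreq_nonneg⟩)
      (eventually_gt_atTop 0 |>.mono fun n => prefixCount_div_le_div_add_div hL hξ)⟩

/-- for `ξ ∈ H(i,j,L)`, the asymptotic frequency of the symbol `2` along
the forward orbit satisfies
`i/L ≤ liminf (1/n)·#{0 ≤ m < n : ξ_m = 2}` and `limsup (1/n)·#{0 ≤ m < n : ξ_m = 2} ≤ j/L`. -/
theorem frequency_bounds
    (i j L : ℕ) (hL : 1 ≤ L) (hij : i ≤ j) (hjL : j ≤ L)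
    (ξ : ℤ → Bool) (hξ : ξ ∈ Hset i j L) :
    (i : ℝ) / L ≤
      Filter.liminf
        (fun n : ℕ =>
          (((Finset.range n).filter fun m : ℕ => ξ ((m : ℕ) : ℤ) = true).card : ℝ) / n)
        Filter.atTop ∧
    Filter.limsup
        (fun n : ℕ =>
          (((Finset.range n).filter fun m : ℕ => ξ ((m : ℕ) : ℤ) = true).card : ℝ) / n)
        Filter.atTop ≤ (j : ℝ) / L :=
  frequency_bounds_general i j L hL ξ hξ
end

section
/- Let f₀ : [0,1] → [0,1] be a C¹ increasing diffeomorphism of [0,1] onto itself with f₀(0) = 0, f₀(1) = 1 and f₀(x) > x for all x ∈ (0,1). Let γ ∈ (0,1) and f₁(x) = γ(1−x). Let b ∈ (0,1) be such that f₀'(x) > 1 for all x ∈ [0,b], and let b'' < b' < b in (0,b) be the points with f₀(b'') = b' and f₀(b') = b. Assume there exist κ > 1 and N ∈ ℕ such that every closed interval J ⊆ [b'', b] admits an integer n = n(J) ≤ N with (f₁ ∘ f₀ⁿ)(J) ⊆ (0, b] and |(f₁ ∘ f₀ⁿ)'(x)| ≥ κ for all x ∈ J. Then for every closed interval J ⊆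 [b'', b] with nonempty interior there exist r ≥ 1 and maps g₁, …, g_r, each equal to f₀ or to f₁, such that the composition g = g_r ∘ ⋯ ∘ g₁ satisfies |g'(x)| ≥ κ for all x ∈ J and g(J) ⊇ [b'', b']. -/
/-!
Keep a word `g` in `f₀, f₁` with `|g'| ≥ κ` on `J = [c, d]` and `g(J) = [p, q] ⊆ (0, b]`.
While `[p, q]` does not cover `[b'', b']`, either `q < b'`, and then `f₀` (with `f₀' ≥ ℓ > 1`
on `[0, b]`, `ℓ` by compactness) maps `[p, q]` into `(0, b)`; or `b'' < p`, and then the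
hypothesis supplies a block `f₁ ∘ f₀ⁿ` expanding by `κ` on `[p, q] ⊆ [b'', b]`. Either way
`|g'| ≥ κ` persists and, by the mean value theorem, the length of `g(J)` grows by the factor
`min ℓ κ > 1`. Since this length stays below `b`, the process stops.
-/

open Set

section Words

variable {α : Type*}

def wordMap (gs : List (α → α)) : α → α := fun y => gs.foldl (fun z g => g z) y

@[simp]
theorem wordMap_nil : wordMap ([] : List (α → α)) = id := rfl

@[simp]
theorem wordMap_singleton (g : α → α) : wordMap [g] = g := rfl

theorem wordMap_cons (g : α → α) (gs : List (α → α)) : wordMap (g :: gs) = wordMap gs ∘ g := rfl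

theorem wordMap_append (gs hs : List (α → α)) :
    wordMap (gs ++ hs) = wordMap hs ∘ wordMap gs := by
  funext y
  simp only [wordMap, List.foldl_append, Function.comp_apply]

theorem wordMap_replicate (n : ℕ) (f : α → α) : wordMap (List.replicate n f) = f^[n] := by
  induction n with
  | zero => rfl
  | succ n ih => rw [List.replicate_succ, wordMap_cons, ih, Function.iterate_succ]

theorem exists_word_eq_comp_iterate (f₀ f₁ : α → α) (n : ℕ) :
    ∃ hs : List (α → α), (∀ h ∈ hs, h ∈ ({f₀, f₁} : Set (α → α))) ∧ wordMap hs = f₁ ∘ f₀^[n] := by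
  refine ⟨List.replicate n f₀ ++ [f₁], ?_, ?_⟩
  · intro h hh
    simp only [List.mem_append, List.mem_replicate, List.mem_singleton] at hh
    simp only [mem_insert_iff, mem_singleton_iff]
    tauto
  · rw [wordMap_append, wordMap_replicate, wordMap_singleton]

theorem mapsTo_wordMap {s : Set α} {gs : List (α → α)} (h : ∀ g ∈ gs, MapsTo g s s) :
    MapsTo (wordMap gs) s s := by
  induction gs with
  | nil => exact mapsTo_id s
  | cons g gs ih =>
    rw [wordMap_cons]
    exact (ih fun g' hg' => h g' (List.mem_cons_of_mem _ hg')).comp (h g List.mem_cons_self)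

end Words

theorem differentiableOn_wordMap {𝕜 E : Type*} [NontriviallyNormedField 𝕜] [NormedAddCommGroup E]
    [NormedSpace 𝕜 E] {s : Set E} {gs : List (E → E)}
    (h : ∀ g ∈ gs, MapsTo g s s ∧ DifferentiableOn 𝕜 g s) : DifferentiableOn 𝕜 (wordMap gs) s := by
  induction gs with
  | nil => exact differentiableOn_id
  | cons g gs ih =>
    obtain ⟨hmaps, hdiff⟩ := h g List.mem_cons_self
    rw [wordMap_cons]
    exact (ih fun g' hg' => h g' (List.mem_cons_of_mem _ hg')).comp hdiff hmaps

theorem mul_sub_le_abs_sub_of_le_abs_derivWithin {f : ℝ → ℝ} {s : Set ℝ} {p q A : ℝ}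
    (hpq : p ≤ q) (hs : Icc p q ⊆ s) (hf : DifferentiableOn ℝ f s)
    (hA : ∀ y ∈ Ioo p q, A ≤ |derivWithin f s y|) : A * (q - p) ≤ |f q - f p| := by
  rcases hpq.eq_or_lt with rfl | hpq
  · simp
  have hderiv : ∀ y ∈ Ioo p q, HasDerivAt f (derivWithin f s y) y := fun y hy =>
    (hf y (hs (Ioo_subset_Icc_self hy))).hasDerivWithinAt.hasDerivAt
      (mem_interior_iff_mem_nhds.mp (interior_mono hs (by rwa [interior_Icc])))
  obtain ⟨ξ, hξ, hslope⟩ := exists_hasDerivAt_eq_slope f _ hpq (hf.mono hs).continuousOn hderiv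
  have h := hA ξ hξ
  rwa [hslope, abs_div, abs_of_pos (sub_pos.mpr hpq), le_div_iff₀ (sub_pos.mpr hpq)] at h

theorem exists_image_Icc_eq_Icc_mul_sub_le {f : ℝ → ℝ} {s : Set ℝ} {p q A : ℝ}
    (hpq : p ≤ q) (hs : Icc p q ⊆ s) (hf : DifferentiableOn ℝ f s)
    (hA : ∀ y ∈ Icc p q, A ≤ |derivWithin f s y|) :
    ∃ p' q', f '' Icc p q = Icc p' q' ∧ A * (q - p) ≤ q' - p' := by
  have himage := (hf.mono hs).continuousOn.image_Icc hpq
  refine ⟨_, _, himage, ?_⟩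
  have hfp := mem_image_of_mem f (left_mem_Icc.mpr hpq)
  have hfq := mem_image_of_mem f (right_mem_Icc.mpr hpq)
  rw [himage] at hfp hfq
  calc A * (q - p) ≤ |f q - f p| :=
        mul_sub_le_abs_sub_of_le_abs_derivWithin hpq hs hf fun y hy => hA y (Ioo_subset_Icc_self hy)
    _ ≤ _ := Real.dist_le_of_mem_Icc hfq hfp

theorem exists_of_bddAbove_of_exists_mul_le {α : Type*} {P : α → ℝ → ℝ → Prop}
    {Q : ℝ → ℝ → Prop} {μ B : ℝ} (hμ : 1 < μ) (hB : ∀ a p q, P a p q → q - p ≤ B)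
    (hstep : ∀ a p q, P a p q → ¬Q p q → ∃ a' p' q', P a' p' q' ∧ μ * (q - p) ≤ q' - p')
    {a : α} {p q : ℝ} (ha : P a p q) (hpq : p < q) : ∃ a' p' q', P a' p' q' ∧ Q p' q' := by
  by_contra! hQ
  have hgrow : ∀ n : ℕ, ∃ a' p' q', P a' p' q' ∧ μ ^ n * (q - p) ≤ q' - p' := by
    intro n
    induction n with
    | zero => exact ⟨a, p, q, ha, by simp⟩
    | succ n ih =>
      obtain ⟨a', p', q', ha', hle⟩ := ih
      obtain ⟨a'', p'', q'', ha'', hle'⟩ := hstep a' p' q' ha' (hQ a' p' q' ha')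
      refine ⟨a'', p'', q'', ha'', ?_⟩
      calc μ ^ (n + 1) * (q - p) = μ * (μ ^ n * (q - p)) := by ring
        _ ≤ μ * (q' - p') := by gcongr
        _ ≤ q'' - p'' := hle'
  obtain ⟨n, hn⟩ := pow_unbounded_of_one_lt (B / (q - p)) hμ
  obtain ⟨a', p', q', ha', hle⟩ := hgrow n
  rw [div_lt_iff₀ (sub_pos.mpr hpq)] at hn
  linarith [hB a' p' q' ha']

theorem mapsTo_Icc_mul_one_sub {γ : ℝ} (h₀ : 0 ≤ γ) (h₁ : γ ≤ 1) :
    MapsTo (fun x => γ * (1 - x)) (Icc 0 1) (Icc 0 1) := fun x hx =>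
  ⟨mul_nonneg h₀ (by linarith [hx.2]), by nlinarith [hx.1, hx.2]⟩

structure IsExpandingWord (L : Set (ℝ → ℝ)) (κ b : ℝ) (J : Set ℝ) (gs : List (ℝ → ℝ))
    (p q : ℝ) : Prop where
  mem_alphabet : ∀ g ∈ gs, g ∈ L
  le_abs_derivWithin : ∀ x ∈ J, κ ≤ |derivWithin (wordMap gs) (Icc 0 1) x|
  image_eq : wordMap gs '' J = Icc p q
  pos : 0 < p
  le : q ≤ b

namespace IsExpandingWord

variable {L : Set (ℝ → ℝ)} {κ b p q : ℝ} {J : Set ℝ} {gs : List (ℝ → ℝ)}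

theorem exists_of_le_abs_derivWithin
    (hL : ∀ g ∈ L, MapsTo g (Icc 0 1) (Icc 0 1) ∧ DifferentiableOn ℝ g (Icc 0 1))
    {c d : ℝ} (hcd : c ≤ d) (hJ : Icc c d ⊆ Icc 0 1) (hgs : ∀ g ∈ gs, g ∈ L)
    (hder : ∀ x ∈ Icc c d, κ ≤ |derivWithin (wordMap gs) (Icc 0 1) x|)
    (himage : wordMap gs '' Icc c d ⊆ Ioc 0 b) :
    ∃ p q, IsExpandingWord L κ b (Icc c d) gs p q ∧ κ * (d - c) ≤ q - p := by
  obtain ⟨p, q, heq, hlen⟩ := exists_image_Icc_eq_Icc_mul_sub_le hcd hJ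
    (differentiableOn_wordMap fun g hg => hL g (hgs g hg)) hder
  have hpq : p ≤ q := nonempty_Icc.mp (heq ▸ (nonempty_Icc.mpr hcd).image _)
  obtain ⟨hp, hq⟩ := (Icc_subset_Ioc_iff hpq).mp (heq ▸ himage)
  exact ⟨p, q, ⟨hgs, hder, heq, hp, hq⟩, hlen⟩

theorem le_of_nonempty (hw : IsExpandingWord L κ b J gs p q) (hJ : J.Nonempty) : p ≤ q :=
  nonempty_Icc.mp (hw.image_eq ▸ hJ.image _)

theorem ne_nil (hw : IsExpandingWord L κ b J gs p q) (hκ : 1 < κ) (hJ : J ⊆ Icc 0 1)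
    (hJne : J.Nonempty) : gs ≠ [] := by
  rintro rfl
  obtain ⟨x, hx⟩ := hJne
  have h := hw.le_abs_derivWithin x hx
  rw [wordMap_nil, derivWithin_id x _ (uniqueDiffOn_Icc zero_lt_one x (hJ hx)), abs_one] at h
  linarith

theorem append (hw : IsExpandingWord L κ b J gs p q)
    (hL : ∀ g ∈ L, MapsTo g (Icc 0 1) (Icc 0 1) ∧ DifferentiableOn ℝ g (Icc 0 1))
    (hJ : J ⊆ Icc 0 1) (hJne : J.Nonempty) (hb : b ≤ 1) {hs : List (ℝ → ℝ)} {A : ℝ}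
    (hhs : ∀ h ∈ hs, h ∈ L) (hA : 1 ≤ A)
    (hder : ∀ y ∈ Icc p q, A ≤ |derivWithin (wordMap hs) (Icc 0 1) y|)
    (himage : wordMap hs '' Icc p q ⊆ Ioc 0 b) :
    ∃ p' q', IsExpandingWord L κ b J (gs ++ hs) p' q' ∧ A * (q - p) ≤ q' - p' := by
  have hpq := hw.le_of_nonempty hJne
  have hpqI : Icc p q ⊆ Icc 0 1 := Icc_subset_Icc hw.pos.le (hw.le.trans hb)
  have hgsL : ∀ g ∈ gs, MapsTo g (Icc 0 1) (Icc 0 1) ∧ DifferentiableOn ℝ g (Icc 0 1) :=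
    fun g hg => hL g (hw.mem_alphabet g hg)
  have hhsL : ∀ h ∈ hs, MapsTo h (Icc 0 1) (Icc 0 1) ∧ DifferentiableOn ℝ h (Icc 0 1) :=
    fun h hh => hL h (hhs h hh)
  have hmem : ∀ x ∈ J, wordMap gs x ∈ Icc p q := fun x hx => hw.image_eq ▸ mem_image_of_mem _ hx
  obtain ⟨p', q', heq, hlen⟩ :=
    exists_image_Icc_eq_Icc_mul_sub_le hpq hpqI (differentiableOn_wordMap hhsL) hder
  have heq' : wordMap (gs ++ hs) '' J = Icc p' q' := by
    rw [wordMap_append, image_comp, hw.image_eq, heq]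
  have hp'q' : p' ≤ q' := nonempty_Icc.mp (heq' ▸ hJne.image _)
  obtain ⟨hp', hq'⟩ := (Icc_subset_Ioc_iff hp'q').mp (heq ▸ himage)
  refine ⟨p', q', ⟨?_, fun x hx => ?_, heq', hp', hq'⟩, hlen⟩
  · exact List.forall_mem_append.mpr ⟨hw.mem_alphabet, hhs⟩
  · rw [wordMap_append, derivWithin_comp x (differentiableOn_wordMap hhsL _ (hpqI (hmem x hx)))
      (differentiableOn_wordMap hgsL x (hJ hx)) (mapsTo_wordMap fun g hg => (hgsL g hg).1), abs_mul]
    exact (hw.le_abs_derivWithin x hx).trans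
      (le_mul_of_one_le_left (abs_nonneg _) (hA.trans (hder _ (hmem x hx))))

theorem exists_step (hw : IsExpandingWord L κ b J gs p q)
    (hL : ∀ g ∈ L, MapsTo g (Icc 0 1) (Icc 0 1) ∧ DifferentiableOn ℝ g (Icc 0 1))
    (hJ : J ⊆ Icc 0 1) (hJne : J.Nonempty) (hb : b ≤ 1) (hκ : 1 ≤ κ)
    {f₀ : ℝ → ℝ} {ℓ b' b'' : ℝ} (hf₀L : f₀ ∈ L) (hmono : StrictMonoOn f₀ (Icc 0 1))
    (hf₀0 : f₀ 0 = 0) (hb' : b' ∈ Icc (0 : ℝ) 1) (hf₀b' : f₀ b' = b) (hℓ : 1 ≤ ℓ)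
    (hf₀' : ∀ x ∈ Icc 0 b, ℓ ≤ derivWithin f₀ (Icc 0 1) x)
    (hblock : ∀ p q, b'' ≤ p → p ≤ q → q ≤ b → ∃ hs : List (ℝ → ℝ), (∀ h ∈ hs, h ∈ L) ∧
      (∀ y ∈ Icc p q, κ ≤ |derivWithin (wordMap hs) (Icc 0 1) y|) ∧ wordMap hs '' Icc p q ⊆ Ioc 0 b)
    (hdone : ¬(p ≤ b'' ∧ b' ≤ q)) :
    ∃ gs' p' q', IsExpandingWord L κ b J gs' p' q' ∧ min ℓ κ * (q - p) ≤ q' - p' := by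
  have hμ : 1 ≤ min ℓ κ := le_min hℓ hκ
  by_cases hq : q < b'
  · have himage : f₀ '' Icc p q ⊆ Ioc 0 b := by
      rintro _ ⟨y, hy, rfl⟩
      have hyI : y ∈ Icc (0 : ℝ) 1 := ⟨hw.pos.le.trans hy.1, hy.2.trans (hq.le.trans hb'.2)⟩
      refine ⟨hf₀0 ▸ hmono (left_mem_Icc.mpr zero_le_one) hyI (hw.pos.trans_le hy.1), ?_⟩
      exact hf₀b' ▸ (hmono hyI hb' (hy.2.trans_lt hq)).le
    have hder : ∀ y ∈ Icc p q, min ℓ κ ≤ |derivWithin f₀ (Icc 0 1) y| := fun y hy =>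
      (min_le_left _ _).trans ((hf₀' y ⟨hw.pos.le.trans hy.1, hy.2.trans hw.le⟩).trans
        (le_abs_self _))
    exact ⟨_, hw.append hL hJ hJne hb (hs := [f₀]) (by simpa using hf₀L) hμ hder himage⟩
  · have hp : b'' ≤ p := le_of_lt (not_le.mp fun h => hdone ⟨h, not_lt.mp hq⟩)
    obtain ⟨hs, hhs, hder, himage⟩ := hblock p q hp (hw.le_of_nonempty hJne) hw.le
    exact ⟨_, hw.append hL hJ hJne hb hhs hμ (fun y hy => (min_le_right _ _).trans (hder y hy))
      himage⟩

end IsExpandingWord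

theorem expanding_itinerary_general
    (f₀ : ℝ → ℝ) (γ : ℝ) (hγ : γ ∈ Set.Ioo (0 : ℝ) 1)
    (hC1 : ContDiffOn ℝ 1 f₀ (Set.Icc 0 1))
    (hmono : StrictMonoOn f₀ (Set.Icc 0 1))
    (hbij : Set.BijOn f₀ (Set.Icc 0 1) (Set.Icc 0 1))
    (hf00 : f₀ 0 = 0)
    (f₁ : ℝ → ℝ) (hf₁ : ∀ x, f₁ x = γ * (1 - x))
    (b b' b'' : ℝ) (hb : b ∈ Set.Ioo (0 : ℝ) 1)
    (hder : ∀ x ∈ Set.Icc 0 b, 1 < derivWithin f₀ (Set.Icc 0 1) x)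
    (hb''pos : 0 < b'') (hb''b' : b'' < b') (hb'b : b' < b)
    (hfb' : f₀ b' = b)
    (κ : ℝ) (hκ : 1 < κ) (N : ℕ)
    (hexp : ∀ c d : ℝ, b'' ≤ c → c ≤ d → d ≤ b →
      ∃ n ≤ N,
        (∀ x ∈ Set.Icc c d, f₁ (f₀^[n] x) ∈ Set.Ioc 0 b) ∧
        ∀ x ∈ Set.Icc c d,
          κ ≤ |derivWithin (fun y => f₁ (f₀^[n] y)) (Set.Icc 0 1) x|)
    (c d : ℝ) (hc : b'' ≤ c) (hcd : c < d) (hd : d ≤ b) :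
    ∃ (r : ℕ) (gs : List (ℝ → ℝ)),
      1 ≤ r ∧ gs.length = r ∧
      (∀ g ∈ gs, g = f₀ ∨ g = f₁) ∧
      (∀ x ∈ Set.Icc c d,
        κ ≤ |derivWithin (fun y => gs.foldl (fun z g => g z) y) (Set.Icc 0 1) x|) ∧
      Set.Icc b'' b' ⊆ (fun y => gs.foldl (fun z g => g z) y) '' Set.Icc c d := by
  have hL : ∀ g ∈ ({f₀, f₁} : Set (ℝ → ℝ)),
      MapsTo g (Icc 0 1) (Icc 0 1) ∧ DifferentiableOn ℝ g (Icc 0 1) := by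
    rintro g (rfl | hg)
    · exact ⟨hbij.mapsTo, hC1.differentiableOn one_ne_zero⟩
    · rw [mem_singleton_iff.mp hg, show f₁ = fun x => γ * (1 - x) from funext hf₁]
      exact ⟨mapsTo_Icc_mul_one_sub hγ.1.le hγ.2.le, by fun_prop⟩
  have hJ : Icc c d ⊆ Icc 0 1 := Icc_subset_Icc (by linarith) (by linarith [hb.2])
  have hJne : (Icc c d).Nonempty := nonempty_Icc.mpr hcd.le
  have hblock : ∀ p q, b'' ≤ p → p ≤ q → q ≤ b → ∃ hs : List (ℝ → ℝ),
      (∀ h ∈ hs, h ∈ ({f₀, f₁} : Set (ℝ → ℝ))) ∧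
      (∀ y ∈ Icc p q, κ ≤ |derivWithin (wordMap hs) (Icc 0 1) y|) ∧
      wordMap hs '' Icc p q ⊆ Ioc 0 b := by
    intro p q hp hpq hq
    obtain ⟨n, -, himage, hder⟩ := hexp p q hp hpq hq
    obtain ⟨hs, hhs, heq⟩ := exists_word_eq_comp_iterate f₀ f₁ n
    exact ⟨hs, hhs, heq ▸ hder, heq ▸ image_subset_iff.mpr himage⟩
  obtain ⟨ℓ, hℓ, hf₀'⟩ := isCompact_Icc.exists_forall_le'
    ((hC1.continuousOn_derivWithin (uniqueDiffOn_Icc zero_lt_one) le_rfl).mono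
      (Icc_subset_Icc le_rfl hb.2.le)) hder
  obtain ⟨gs₀, hgs₀, hder₀, himage₀⟩ := hblock c d hc hcd.le hd
  obtain ⟨p₀, q₀, hw₀, hlen₀⟩ :=
    IsExpandingWord.exists_of_le_abs_derivWithin hL hcd.le hJ hgs₀ hder₀ himage₀
  obtain ⟨gs, p, q, hw, hp, hq⟩ := exists_of_bddAbove_of_exists_mul_le
    (Q := fun p q => p ≤ b'' ∧ b' ≤ q) (B := b) (lt_min hℓ hκ)
    (fun _ _ _ hw => by linarith [hw.pos, hw.le])
    (fun _ _ _ hw hdone => hw.exists_step hL hJ hJne hb.2.le hκ.le (Or.inl rfl) hmono hf00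
      ⟨by linarith, by linarith [hb.2]⟩ hfb' hℓ.le hf₀' hblock hdone) hw₀ (by nlinarith)
  refine ⟨gs.length, gs, List.length_pos_iff.mpr (hw.ne_nil hκ hJ hJne),
    rfl, hw.mem_alphabet, hw.le_abs_derivWithin, ?_⟩
  exact (Icc_subset_Icc hp hq).trans hw.image_eq.symm.subset

/-- expanding itineraries, Lemma `l.xJ`: given the interval maps `f₀`
(a `C¹` increasing diffeomorphism of `[0,1]` with `f₀(0)=0`, `f₀(1)=1`, `f₀(x)>x` on
`(0,1)`) and `f₁(x)=γ(1−x)`, a point `b` with `f₀' > 1` on `[0,b]`, pre-images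
`b'' < b' < b` of `b` (i.e. `f₀(b'')=b'`, `f₀(b')=b`), and the expansion hypothesis
(for every closed interval `J ⊆ [b'',b]` some `n = n(J) ≤ N` has
`f₁∘f₀ⁿ(J) ⊆ (0,b]` and `|(f₁∘f₀ⁿ)'| ≥ κ` on `J`), then every closed interval
`J = [c,d] ⊆ [b'',b]` with nonempty interior admits a finite composition
`g = g_r ∘ ⋯ ∘ g₁` of the maps `f₀, f₁` with `|g'| ≥ κ` on `J` and `g(J) ⊇ [b'',b']`. -/
theorem expanding_itinerary
    (f₀ : ℝ → ℝ) (γ : ℝ) (hγ : γ ∈ Set.Ioo (0 : ℝ) 1)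
    (hC1 : ContDiffOn ℝ 1 f₀ (Set.Icc 0 1))
    (hmono : StrictMonoOn f₀ (Set.Icc 0 1))
    (hbij : Set.BijOn f₀ (Set.Icc 0 1) (Set.Icc 0 1))
    (hf00 : f₀ 0 = 0) (hf01 : f₀ 1 = 1)
    (habove : ∀ x ∈ Set.Ioo (0 : ℝ) 1, x < f₀ x)
    (f₁ : ℝ → ℝ) (hf₁ : ∀ x, f₁ x = γ * (1 - x))
    (b b' b'' : ℝ) (hb : b ∈ Set.Ioo (0 : ℝ) 1)
    (hder : ∀ x ∈ Set.Icc 0 b, 1 < derivWithin f₀ (Set.Icc 0 1) x)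
    (hb''pos : 0 < b'') (hb''b' : b'' < b') (hb'b : b' < b)
    (hfb'' : f₀ b'' = b') (hfb' : f₀ b' = b)
    (κ : ℝ) (hκ : 1 < κ) (N : ℕ)
    (hexp : ∀ c d : ℝ, b'' ≤ c → c ≤ d → d ≤ b →
      ∃ n ≤ N,
        (∀ x ∈ Set.Icc c d, f₁ (f₀^[n] x) ∈ Set.Ioc 0 b) ∧
        ∀ x ∈ Set.Icc c d,
          κ ≤ |derivWithin (fun y => f₁ (f₀^[n] y)) (Set.Icc 0 1) x|)
    (c d : ℝ) (hc : b'' ≤ c) (hcd : c < d) (hd : d ≤ b) :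
    ∃ (r : ℕ) (gs : List (ℝ → ℝ)),
      1 ≤ r ∧ gs.length = r ∧
      (∀ g ∈ gs, g = f₀ ∨ g = f₁) ∧
      (∀ x ∈ Set.Icc c d,
        κ ≤ |derivWithin (fun y => gs.foldl (fun z g => g z) y) (Set.Icc 0 1) x|) ∧
      Set.Icc b'' b' ⊆ (fun y => gs.foldl (fun z g => g z) y) '' Set.Icc c d :=
  expanding_itinerary_general f₀ γ hγ hC1 hmono hbij hf00 f₁ hf₁ b b' b'' hb hder hb''pos hb''b'
    hb'b hfb' κ hκ N hexp c d hc hcd hd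
end
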